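/- arXiv:2412.00040 — 10 statements merged into one kernel-verified Lean document; each statement's English description precedes it below -/
import Mathlib

section
/- For every nonnegative integer n, the alternating sum ∑_{k=0}^{n} (−1)^k · C(n,k) · 2^{−k} · C(2k,k) equals 2^{−n} · C(n, n/2) if n is even, and equals 0 if n is odd. (Here C(a,b) denotes the usual binomial coefficient and the identity is an identity of rational numbers.) -/
/-!
Expand `(X - (1 + X)² / 2)ⁿ` binomially: the coefficient of `Xⁿ` in the `k`-th term
`C(n,k) (-1/2)ᵏ (1 + X)²ᵏ Xⁿ⁻ᵏ` is `C(n,k) (-1/2)ᵏ C(2k,k)`, so the coefficient of `Xⁿ` in the whole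
power is the sum. But `X - (1 + X)² / 2 = -(1 + X²) / 2`, and the coefficient of `Xⁿ` in
`(1 + X²)ⁿ` is `C(n, n/2)` for even `n` and `0` for odd `n`.
-/

open Polynomial Finset

namespace Polynomial

theorem coeff_one_add_X_sq_pow {R : Type*} [CommSemiring R] (n m : ℕ) :
    ((1 + X ^ 2 : R[X]) ^ n).coeff m = if Even m then (n.choose (m / 2) : R) else 0 := by
  have hexpand : (1 + X ^ 2 : R[X]) ^ n = expand R 2 ((1 + X) ^ n) := by simp
  simp only [hexpand, coeff_expand two_pos, coeff_one_add_X_pow, even_iff_two_dvd]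

theorem coeff_C_mul_one_add_X_sq_add_X_pow {R : Type*} [CommSemiring R] (a : R) (n : ℕ) :
    ((C a * (1 + X) ^ 2 + X) ^ n).coeff n =
      ∑ k ∈ range (n + 1), a ^ k * n.choose k * (2 * k).choose k := by
  rw [add_pow, finsetSum_coeff]
  refine sum_congr rfl fun k hk => ?_
  have hkn : n - k + k = n := Nat.sub_add_cancel (Nat.lt_succ_iff.mp (mem_range.mp hk))
  calc ((C a * (1 + X) ^ 2) ^ k * X ^ (n - k) * (n.choose k : R[X])).coeff n
      = (C (a ^ k * n.choose k) * ((1 + X) ^ (2 * k) * X ^ (n - k))).coeff (k + (n - k)) := by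
        rw [add_comm k, hkn, pow_mul, mul_pow, ← C_pow, ← C_eq_natCast, C_mul]; congr 1; ring
    _ = a ^ k * n.choose k * (2 * k).choose k := by
        rw [coeff_C_mul, coeff_mul_X_pow, coeff_one_add_X_pow]

end Polynomial

theorem knuth_old_sum (n : ℕ) :
    ∑ k ∈ Finset.range (n + 1),
      (-1 : ℚ) ^ k * (n.choose k : ℚ) * (2 : ℚ) ^ (-(k : ℤ)) * ((2 * k).choose k : ℚ)
    = if Even n then (2 : ℚ) ^ (-(n : ℤ)) * (n.choose (n / 2) : ℚ) else 0 := by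
  have hhalf : ∀ m : ℕ, (-1 : ℚ) ^ m * (2 : ℚ) ^ (-(m : ℤ)) = (-2⁻¹) ^ m := fun m => by
    rw [zpow_neg, zpow_natCast, ← inv_pow, ← mul_pow, neg_one_mul]
  have hpoly : C (-2⁻¹ : ℚ) * (1 + X) ^ 2 + X = C (-2⁻¹) * (1 + X ^ 2) := by
    have htwo : C (-2⁻¹ : ℚ) * 2 = -1 := by rw [← C_ofNat, ← C_mul]; norm_num
    linear_combination X * htwo
  calc _ = ∑ k ∈ range (n + 1), (-2⁻¹ : ℚ) ^ k * n.choose k * (2 * k).choose k :=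
        sum_congr rfl fun k _ => by rw [← hhalf]; ring
    _ = (-2⁻¹ : ℚ) ^ n * ((1 + X ^ 2 : ℚ[X]) ^ n).coeff n := by
        rw [← coeff_C_mul_one_add_X_sq_add_X_pow, hpoly, mul_pow, ← C_pow, coeff_C_mul]
    _ = _ := by
        rw [coeff_one_add_X_sq_pow]
        split_ifs with hn
        · rw [← hhalf, hn.neg_one_pow, one_mul]
        · rw [mul_zero]
end

section
/- For every real number u > −1, ∫_0^π (cos(x/2))^u dx = 2^{−u} · π · B(u, u/2), and likewise ∫_0^π (sin(x/2))^u dx = 2^{−u} · π · B(u, u/2), where the powers are real powers (the bases cos(x/2) and sin(x/2) are nonnegative on [0, π]). -/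
open Real

/-- Generalized binomial coefficient `B(a,b) = Γ(a+1)/(Γ(b+1)·Γ(a−b+1))`. -/
noncomputable def gbinom (a b : ℝ) : ℝ :=
  Real.Gamma (a + 1) / (Real.Gamma (b + 1) * Real.Gamma (a - b + 1))

/-! Substituting `t = sin² θ` identifies `∫₀^{π/2} sin^{2a-1} θ cos^{2b-1} θ dθ` with half the
Beta integral `B(a, b) = Γ(a)Γ(b)/Γ(a+b)`. For `a = (u+1)/2`, `b = 1/2` (or the reverse, for the
cosine) Legendre's duplication formula `Γ((u+1)/2) Γ(u/2+1) = 2^{-u} √π Γ(u+1)` turns this Beta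
value into `2^{-u} π Γ(u+1) / Γ(u/2+1)²`. -/

open intervalIntegral ProbabilityTheory

theorem integral_rpow_mul_one_sub_rpow {a b : ℝ} (ha : 0 < a) (hb : 0 < b) :
    ∫ t in (0 : ℝ)..1, t ^ (a - 1) * (1 - t) ^ (b - 1) = beta a b := by
  rw [beta_eq_betaIntegralReal a b ha hb, Complex.betaIntegral, ← Complex.reCLM_apply,
    ← ContinuousLinearMap.intervalIntegral_comp_comm _
      (Complex.betaIntegral_convergent (by simpa) (by simpa))]
  refine integral_congr fun t ht => ?_
  rw [Set.uIcc_of_le zero_le_one] at ht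
  simp only [Complex.reCLM_apply]
  norm_cast
  rw [← Complex.ofReal_cpow ht.1, ← Complex.ofReal_cpow (sub_nonneg.2 ht.2)]
  norm_cast

theorem sq_rpow_sub_one_mul_self {x : ℝ} (hx : 0 < x) (p : ℝ) :
    (x ^ 2) ^ (p - 1) * x = x ^ (2 * p - 1) := by
  rw [← rpow_natCast, ← rpow_mul hx.le, ← rpow_add_one hx.ne']
  ring_nf

theorem integral_sin_rpow_mul_cos_rpow {a b : ℝ} (ha : 0 < a) (hb : 0 < b) :
    ∫ θ in (0 : ℝ)..π / 2, sin θ ^ (2 * a - 1) * cos θ ^ (2 * b - 1) = beta a b / 2 := by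
  rw [← integral_rpow_mul_one_sub_rpow ha hb, eq_div_iff two_ne_zero, ← integral_mul_const]
  -- The substitution is monotone, so no integrability of the singular integrands is needed.
  have h := integral_comp_mul_deriv_of_deriv_nonneg (a := 0) (b := π / 2)
    (f := fun θ => sin θ ^ 2) (f' := fun θ => 2 * sin θ * cos θ)
    (g := fun t => t ^ (a - 1) * (1 - t) ^ (b - 1)) (by fun_prop) ?_ ?_
  · simp only [sin_zero, sin_pi_div_two, Function.comp_apply] at h
    norm_num at h
    rw [← h]
    refine integral_congr_Ioo_of_le (by positivity) fun θ ⟨hθ₀, hθ₁⟩ => ?_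
    have hs : 0 < sin θ := sin_pos_of_pos_of_lt_pi hθ₀ (by linarith [pi_pos])
    have hc : 0 < cos θ := cos_pos_of_mem_Ioo ⟨by linarith, hθ₁⟩
    rw [← cos_sq', ← sq_rpow_sub_one_mul_self hs, ← sq_rpow_sub_one_mul_self hc]
    ring
  · intro θ _
    simpa using (hasDerivAt_sin θ).fun_pow 2
  · rintro θ ⟨hθ₀, hθ₁⟩
    rw [min_eq_left (by positivity)] at hθ₀
    rw [max_eq_right (by positivity)] at hθ₁
    have := sin_nonneg_of_nonneg_of_le_pi hθ₀.le (by linarith [pi_pos])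
    have := cos_nonneg_of_mem_Icc ⟨by linarith, hθ₁.le⟩
    positivity

theorem beta_comm (a b : ℝ) : beta a b = beta b a := by
  rw [beta, beta, mul_comm, add_comm]

theorem integral_sin_rpow {u : ℝ} (hu : -1 < u) :
    ∫ θ in (0 : ℝ)..π / 2, sin θ ^ u = beta ((u + 1) / 2) (1 / 2) / 2 := by
  rw [← integral_sin_rpow_mul_cos_rpow (by linarith) one_half_pos]
  norm_num [show 2 * ((u + 1) / 2) - 1 = u by ring]

theorem integral_cos_rpow {u : ℝ} (hu : -1 < u) :
    ∫ θ in (0 : ℝ)..π / 2, cos θ ^ u = beta ((u + 1) / 2) (1 / 2) / 2 := by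
  rw [beta_comm, ← integral_sin_rpow_mul_cos_rpow one_half_pos (by linarith)]
  norm_num [show 2 * ((u + 1) / 2) - 1 = u by ring]

theorem beta_add_one_div_two_one_half {u : ℝ} (hu : -1 < u) :
    beta ((u + 1) / 2) (1 / 2) = 2 ^ (-u) * π * gbinom u (u / 2) := by
  have hΓ : Gamma (u / 2 + 1) ≠ 0 := (Gamma_pos_of_pos (by linarith)).ne'
  have hdup := Gamma_mul_Gamma_add_half ((u + 1) / 2)
  rw [show (u + 1) / 2 + 1 / 2 = u / 2 + 1 by ring, show 2 * ((u + 1) / 2) = u + 1 by ring,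
    show 1 - (u + 1) = -u by ring] at hdup
  rw [beta, gbinom, Gamma_one_half_eq, show (u + 1) / 2 + 1 / 2 = u / 2 + 1 by ring,
    show u - u / 2 + 1 = u / 2 + 1 by ring]
  generalize Gamma (u / 2 + 1) = G at hΓ hdup ⊢
  field_simp
  linear_combination √π * hdup + Gamma (u + 1) * 2 ^ (-u) * sq_sqrt pi_pos.le

theorem integral_cos_sin_half_rpow (u : ℝ) (hu : u > -1) :
    (∫ x in (0 : ℝ)..π, Real.cos (x / 2) ^ u) = 2 ^ (-u) * π * gbinom u (u / 2) ∧
    (∫ x in (0 : ℝ)..π, Real.sin (x / 2) ^ u) = 2 ^ (-u) * π * gbinom u (u / 2) := by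
  have integral_comp_half (f : ℝ → ℝ) :
      ∫ x in (0 : ℝ)..π, f (x / 2) = 2 * ∫ θ in (0 : ℝ)..π / 2, f θ := by
    simp
  rw [integral_comp_half (cos · ^ u), integral_comp_half (sin · ^ u), integral_cos_rpow hu,
    integral_sin_rpow hu, beta_add_one_div_two_one_half hu]
  constructor <;> ring
end

section
/- Let m and n be nonnegative integers and let v > −1 be a real number. Then ∑_{k=0}^{n} (−1)^k · C(n,k) · 2^{−k−m} · B(2k+2m+v, (2k+2m+v)/2) · B(k+m+v, v/2)^{−1} equals ∑_{k=0}^{⌊m/2⌋} C(m,2k) · 2^{−n−2k} · C(2k+n, (2k+n)/2) · B((2k+n+v)/2, (2k+n)/2)^{−1} if n is even, and equals −∑_{k=1}^{⌈m/2⌉} C(m, 2k−1) · 2^{−n−2k+1} · C(2k+n−1, (2k+n−1)/2) · B((2k+n−1+v)/2, (2k+n−1)/2)^{−1} if n is odd. -/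
/-!
Put `c = (v + 1) / 2`. Legendre's duplication formula turns the `k`-th summand on the left into a
multiple of `(-2)^k 2^m β(m + k + c, c)`, where `β` is Euler's Beta function; and
`β(k + c, c) = ∫₀¹ x^k (x(1-x))^(c-1) dx` is the `k`-th moment of a symmetric Beta weight. So the
left side is the moment of `(2x)^m (1-2x)^n = (1 - (1-2x))^m (1-2x)^n`, a signed binomial
combination of moments of `(1-2x)^N`. Because `(1-2x)^2 = 1 - 4x(1-x)` and the weight
`x(1-x)` shifts `c` to `c + 1`, Pascal's rule for `β` computes these moments by induction on `N`:
they vanish for odd `N` and equal `2^(1-2c) β(N/2 + 1/2, c)` for even `N`. Duplication once more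
identifies the latter with the summands on the right.
-/

open Real

open Polynomial Finset ProbabilityTheory

namespace ProbabilityTheory

lemma beta_comm (x y : ℝ) : beta x y = beta y x := by
  rw [beta, beta, mul_comm, add_comm]

lemma beta_add_one_left {x y : ℝ} (hx : x ≠ 0) (hxy : x + y ≠ 0) :
    beta (x + 1) y = x / (x + y) * beta x y := by
  rw [beta, beta, add_right_comm, Gamma_add_one hx, Gamma_add_one hxy]
  simp only [div_eq_mul_inv, mul_inv]
  ring

lemma beta_eq_beta_add_one_left_add_beta_add_one_right {x y : ℝ} (hx : x ≠ 0) (hy : y ≠ 0)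
    (hxy : x + y ≠ 0) : beta x y = beta (x + 1) y + beta x (y + 1) := by
  rw [beta_add_one_left hx hxy, beta_comm x (y + 1), beta_add_one_left hy (by rwa [add_comm]),
    beta_comm y, add_comm y]
  field_simp

lemma beta_self {c : ℝ} (hc : 0 < c) : beta c c = 2 ^ (1 - 2 * c) * beta (1 / 2) c := by
  have hdup := Gamma_mul_Gamma_add_half c
  have : Gamma (c + 1 / 2) ≠ 0 := (Gamma_pos_of_pos (by positivity)).ne'
  have : Gamma (2 * c) ≠ 0 := (Gamma_pos_of_pos (by positivity)).ne'
  rw [beta, beta, Gamma_one_half_eq, ← two_mul, add_comm]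
  field_simp
  rw [show (2 * c + 1) / 2 = c + 1 / 2 by ring, hdup]

end ProbabilityTheory

/-- The linear functional `f ↦ ∫₀¹ f(x) (x(1-x))^(c-1) dx`, given by its values on monomials. -/
noncomputable def betaMoment (c : ℝ) : ℝ[X] →ₗ[ℝ] ℝ :=
  Polynomial.lsum fun k => LinearMap.mulRight ℝ (beta (k + c) c)

@[simp]
lemma betaMoment_monomial (c : ℝ) (k : ℕ) (a : ℝ) :
    betaMoment c (monomial k a) = a * beta (k + c) c := by
  simp [betaMoment]

lemma betaMoment_X_mul_one_sub_X_mul {c : ℝ} (hc : 0 < c) (f : ℝ[X]) :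
    betaMoment c (X * (1 - X) * f) = betaMoment (c + 1) f := by
  induction f using Polynomial.induction_on' with
  | add p q hp hq => rw [mul_add, map_add, map_add, hp, hq]
  | monomial k a =>
    have hpoly : X * (1 - X) * monomial k a = monomial (k + 1) a - monomial (k + 2) a := by
      simp only [← C_mul_X_pow_eq_monomial]; ring
    have hpascal := beta_eq_beta_add_one_left_add_beta_add_one_right
      (x := k + 1 + c) (y := c) (by positivity) hc.ne' (by positivity)
    rw [hpoly, map_sub, betaMoment_monomial, betaMoment_monomial, betaMoment_monomial,
      show (k : ℝ) + (c + 1) = k + 1 + c by ring]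
    push_cast
    rw [show (k : ℝ) + 2 + c = k + 1 + c + 1 by ring]
    linear_combination a * hpascal

lemma betaMoment_one_sub_two_X_pow_add_two {c : ℝ} (hc : 0 < c) (N : ℕ) :
    betaMoment c ((1 - 2 * X) ^ (N + 2)) =
      betaMoment c ((1 - 2 * X) ^ N) - 4 * betaMoment (c + 1) ((1 - 2 * X) ^ N) := by
  have hpoly : ((1 : ℝ[X]) - 2 * X) ^ (N + 2) =
      (1 - 2 * X) ^ N - (4 : ℝ) • (X * (1 - X) * (1 - 2 * X) ^ N) := by
    rw [smul_eq_C_mul, map_ofNat]; ring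
  rw [hpoly, map_sub, map_smul, betaMoment_X_mul_one_sub_X_mul hc, smul_eq_mul]

lemma betaMoment_one_sub_two_X_pow_odd (p : ℕ) {c : ℝ} (hc : 0 < c) :
    betaMoment c ((1 - 2 * X) ^ (2 * p + 1)) = 0 := by
  induction p generalizing c with
  | zero =>
    have hpoly : ((1 : ℝ[X]) - 2 * X) ^ (2 * 0 + 1) = monomial 0 1 - monomial 1 2 := by
      simp only [← C_mul_X_pow_eq_monomial, map_one, map_ofNat]; ring
    rw [hpoly, map_sub, betaMoment_monomial, betaMoment_monomial, Nat.cast_one, add_comm 1,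
      beta_add_one_left hc.ne' (by positivity), Nat.cast_zero, zero_add]
    field_simp
    ring
  | succ p ih =>
    rw [show 2 * (p + 1) + 1 = 2 * p + 1 + 2 by ring, betaMoment_one_sub_two_X_pow_add_two hc,
      ih hc, ih (by positivity)]
    ring

lemma betaMoment_one_sub_two_X_pow_even (p : ℕ) {c : ℝ} (hc : 0 < c) :
    betaMoment c ((1 - 2 * X) ^ (2 * p)) = 2 ^ (1 - 2 * c) * beta (p + 1 / 2) c := by
  induction p generalizing c with
  | zero =>
    rw [mul_zero, pow_zero, ← monomial_zero_one, betaMoment_monomial, Nat.cast_zero, zero_add,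
      one_mul, zero_add, beta_self hc]
  | succ p ih =>
    have hpascal := beta_eq_beta_add_one_left_add_beta_add_one_right
      (x := p + 1 / 2) (y := c) (by positivity) hc.ne' (by positivity)
    have hpow : (2 : ℝ) ^ (1 - 2 * (c + 1)) = 2 ^ (1 - 2 * c) / 4 := by
      rw [show 1 - 2 * (c + 1) = (1 - 2 * c) - 2 by ring, rpow_sub two_pos]; norm_num
    rw [show 2 * (p + 1) = 2 * p + 2 by ring, betaMoment_one_sub_two_X_pow_add_two hc,
      ih hc, ih (by positivity), hpow]
    push_cast
    rw [show (p : ℝ) + 1 + 1 / 2 = p + 1 / 2 + 1 by ring]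
    linear_combination 2 ^ (1 - 2 * c) * hpascal

lemma betaMoment_one_sub_two_X_pow {c : ℝ} (hc : 0 < c) (N : ℕ) :
    betaMoment c ((1 - 2 * X) ^ N) =
      if Even N then 2 ^ (1 - 2 * c) * beta (N / 2 + 1 / 2) c else 0 := by
  obtain ⟨p, rfl | rfl⟩ := Nat.even_or_odd' N
  · rw [betaMoment_one_sub_two_X_pow_even p hc, if_pos (even_two_mul p)]
    push_cast; ring_nf
  · rw [betaMoment_one_sub_two_X_pow_odd p hc,
      if_neg (Nat.not_even_iff_odd.2 (odd_two_mul_add_one p))]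

lemma one_sub_pow_mul_pow {R : Type*} [CommRing R] (y : R) (m n : ℕ) :
    (1 - y) ^ m * y ^ n = ∑ j ∈ range (m + 1), ((-1) ^ j * m.choose j : ℤ) • y ^ (n + j) := by
  rw [sub_eq_neg_add, add_pow, sum_mul]
  refine sum_congr rfl fun j _ => ?_
  rw [neg_pow, zsmul_eq_mul, pow_add]
  push_cast
  ring

lemma betaMoment_two_X_pow_mul_one_sub_two_X_pow_eq_sum_betaMoment (c : ℝ) (m n : ℕ) :
    betaMoment c ((2 * X) ^ m * (1 - 2 * X) ^ n) =
      ∑ j ∈ range (m + 1), (-1) ^ j * m.choose j * betaMoment c ((1 - 2 * X) ^ (n + j)) := by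
  have hpoly := one_sub_pow_mul_pow (1 - 2 * X : ℝ[X]) m n
  rw [sub_sub_cancel] at hpoly
  rw [hpoly, map_sum]
  simp only [map_zsmul]
  simp only [zsmul_eq_mul]
  push_cast
  rfl

lemma betaMoment_two_X_pow_mul_one_sub_two_X_pow_eq_sum_beta (c : ℝ) (m n : ℕ) :
    betaMoment c ((2 * X) ^ m * (1 - 2 * X) ^ n) =
      ∑ k ∈ range (n + 1), n.choose k * (2 ^ m * (-2) ^ k) * beta ((m + k : ℕ) + c) c := by
  rw [sub_eq_add_neg, add_comm, add_pow, mul_sum, map_sum]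
  refine sum_congr rfl fun k _ => ?_
  have hpoly : (2 * X) ^ m * ((-(2 * X)) ^ k * 1 ^ (n - k) * (n.choose k : ℝ[X])) =
      monomial (m + k) ((n.choose k : ℝ) * (2 ^ m * (-2) ^ k)) := by
    rw [← C_mul_X_pow_eq_monomial]
    simp only [map_mul, map_pow, map_neg, map_ofNat, map_natCast]
    ring
  rw [hpoly, betaMoment_monomial]

lemma gbinom_natCast {n k : ℕ} (h : k ≤ n) : gbinom n k = n.choose k := by
  rw [gbinom, Nat.cast_choose ℝ h, ← Nat.cast_sub h, Gamma_nat_eq_factorial,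
    Gamma_nat_eq_factorial, Gamma_nat_eq_factorial]

lemma gbinom_symm (a b : ℝ) : gbinom a b = gbinom a (a - b) := by
  rw [gbinom, gbinom, sub_sub_cancel, mul_comm]

lemma gbinom_two_mul_self {x : ℝ} (hx : -1 < x) :
    gbinom (2 * x) x = 2 ^ (2 * x) * Gamma (x + 1 / 2) / (√π * Gamma (x + 1)) := by
  have hdup := Gamma_mul_Gamma_add_half (x + 1 / 2)
  have : Gamma (x + 1) ≠ 0 := (Gamma_pos_of_pos (by linarith)).ne'
  rw [show x + 1 / 2 + 1 / 2 = x + 1 by ring, show 2 * (x + 1 / 2) = 2 * x + 1 by ring,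
    show 1 - (2 * x + 1) = -(2 * x) by ring, rpow_neg two_pos.le] at hdup
  rw [gbinom, show 2 * x - x = x by ring]
  generalize Gamma (x + 1 / 2) = G at hdup ⊢
  field_simp at hdup ⊢
  linear_combination -hdup

lemma gbinom_two_mul_self_mul_inv_gbinom_add {x y : ℝ} (hx : -1 / 2 < x) (hy : -1 / 2 < y) :
    gbinom (2 * x) x * (gbinom (x + y) y)⁻¹ =
      2 ^ (2 * x) * (Gamma (y + 1) / (√π * Gamma (y + 1 / 2))) * beta (x + 1 / 2) (y + 1 / 2) := by
  have : Gamma (x + 1) ≠ 0 := (Gamma_pos_of_pos (by linarith)).ne'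
  have : Gamma (y + 1 / 2) ≠ 0 := (Gamma_pos_of_pos (by linarith)).ne'
  have : Gamma (x + y + 1) ≠ 0 := (Gamma_pos_of_pos (by linarith)).ne'
  rw [gbinom_two_mul_self (by linarith), gbinom, beta, show x + y - y = x by ring,
    show x + 1 / 2 + (y + 1 / 2) = x + y + 1 by ring]
  generalize Gamma (y + 1 / 2) = G at *
  field_simp

lemma sum_range_ite_even {M : Type*} [AddCommMonoid M] (m : ℕ) (g : ℕ → M) :
    ∑ j ∈ range (m + 1), (if Even j then g j else 0) = ∑ k ∈ range (m / 2 + 1), g (2 * k) := by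
  rw [← sum_filter]
  refine sum_nbij' (· / 2) (2 * ·) ?_ ?_ ?_ ?_ ?_ <;>
    simp only [mem_filter, mem_range, Nat.even_iff] <;> intro j hj
  all_goals first | omega | congr 1; omega

lemma sum_range_ite_odd {M : Type*} [AddCommMonoid M] (m : ℕ) (g : ℕ → M) :
    ∑ j ∈ range (m + 1), (if Odd j then g j else 0) =
      ∑ k ∈ Icc 1 ((m + 1) / 2), g (2 * k - 1) := by
  rw [← sum_filter]
  refine sum_nbij' (fun j => (j + 1) / 2) (2 * · - 1) ?_ ?_ ?_ ?_ ?_ <;>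
    simp only [mem_filter, mem_range, mem_Icc, Nat.odd_iff] <;> intro j hj
  all_goals first | omega | congr 1; omega

lemma sum_neg_one_pow_mul_choose_mul_ite_even (m n : ℕ) (f : ℕ → ℝ) :
    ∑ j ∈ range (m + 1), (-1) ^ j * m.choose j * (if Even (n + j) then f (n + j) else 0) =
      if Even n then ∑ k ∈ range (m / 2 + 1), m.choose (2 * k) * f (2 * k + n)
      else -∑ k ∈ Icc 1 ((m + 1) / 2), m.choose (2 * k - 1) * f (2 * k + n - 1) := by
  split_ifs with hn
  · rw [← sum_range_ite_even m fun j => m.choose j * f (j + n)]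
    refine sum_congr rfl fun j _ => ?_
    rcases Nat.even_or_odd j with hj | hj
    · simp [hj, hn.add hj, hj.neg_one_pow, add_comm]
    · simp [Nat.not_even_iff_odd.2 hj, Nat.even_add, hn]
  · have hshift : ∑ k ∈ Icc 1 ((m + 1) / 2), (m.choose (2 * k - 1) : ℝ) * f (2 * k + n - 1) =
        ∑ k ∈ Icc 1 ((m + 1) / 2), (m.choose (2 * k - 1) : ℝ) * f (2 * k - 1 + n) :=
      sum_congr rfl fun k hk => by
        rw [mem_Icc] at hk
        rw [show 2 * k + n - 1 = 2 * k - 1 + n by omega]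
    rw [hshift, ← sum_range_ite_odd m fun j => m.choose j * f (j + n), ← sum_neg_distrib]
    refine sum_congr rfl fun j _ => ?_
    rcases Nat.even_or_odd j with hj | hj
    · simp [hj, Nat.not_odd_iff_even.2 hj, Nat.even_add, hn]
    · simp [hj, hj.neg_one_pow, Nat.even_add, hn, Nat.not_even_iff_odd.2 hj, add_comm]

noncomputable def centralTerm (v : ℝ) (N : ℕ) : ℝ :=
  2 ^ (-(N : ℝ)) * N.choose (N / 2) * (gbinom ((N + v) / 2) (N / 2))⁻¹

lemma centralTerm_eq {v : ℝ} (hv : -1 < v) {N : ℕ} (hN : Even N) :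
    centralTerm v N =
      Gamma (v / 2 + 1) / (√π * Gamma (v / 2 + 1 / 2)) * beta (N / 2 + 1 / 2) (v / 2 + 1 / 2) := by
  obtain ⟨q, rfl⟩ := hN
  have hratio := gbinom_two_mul_self_mul_inv_gbinom_add (x := q) (y := v / 2)
    (by linarith [q.cast_nonneg (α := ℝ)]) (by linarith)
  have hchoose : gbinom (2 * q) q = (2 * q).choose q := by
    exact_mod_cast gbinom_natCast (n := 2 * q) (k := q) (by omega)
  have hsymm : gbinom (q + v / 2) q = gbinom (q + v / 2) (v / 2) := by
    rw [gbinom_symm, add_sub_cancel_left]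
  rw [centralTerm, ← two_mul, Nat.mul_div_cancel_left q two_pos]
  push_cast
  rw [show (2 * q + v) / 2 = q + v / 2 by ring, show (2 * q : ℝ) / 2 = q by ring, hsymm, ← hchoose,
    mul_assoc, hratio, ← mul_assoc, ← mul_assoc, ← rpow_add two_pos, neg_add_cancel, rpow_zero,
    one_mul]

lemma two_rpow_neg_mul_gbinom_mul_inv_gbinom {v : ℝ} (hv : -1 < v) {a : ℝ} (ha : 0 ≤ a) :
    2 ^ (-a) * gbinom (2 * a + v) ((2 * a + v) / 2) * (gbinom (a + v) (v / 2))⁻¹ =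
      2 ^ (a + v) * (Gamma (v / 2 + 1) / (√π * Gamma (v / 2 + 1 / 2))) *
        beta (a + v / 2 + 1 / 2) (v / 2 + 1 / 2) := by
  have hratio := gbinom_two_mul_self_mul_inv_gbinom_add (x := a + v / 2) (y := v / 2)
    (by linarith) (by linarith)
  rw [show 2 * (a + v / 2) = 2 * a + v by ring, show a + v / 2 + v / 2 = a + v by ring] at hratio
  rw [show (2 * a + v) / 2 = a + v / 2 by ring, mul_assoc, hratio, ← mul_assoc, ← mul_assoc,
    ← rpow_add two_pos, show -a + (2 * a + v) = a + v by ring]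

lemma sum_gbinom_mul_inv_gbinom_eq_sum_centralTerm {v : ℝ} (hv : -1 < v) (m n : ℕ) :
    ∑ k ∈ range (n + 1),
      (-1 : ℝ) ^ k * (n.choose k : ℝ) * (2 : ℝ) ^ (-(k : ℝ) - (m : ℝ)) *
        gbinom (2 * (k : ℝ) + 2 * (m : ℝ) + v) ((2 * (k : ℝ) + 2 * (m : ℝ) + v) / 2) *
        (gbinom ((k : ℝ) + (m : ℝ) + v) (v / 2))⁻¹ =
      ∑ j ∈ range (m + 1), (-1) ^ j * m.choose j *
        (if Even (n + j) then centralTerm v (n + j) else 0) := by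
  have hc : 0 < v / 2 + 1 / 2 := by linarith
  calc _ = 2 ^ v * (Gamma (v / 2 + 1) / (√π * Gamma (v / 2 + 1 / 2))) *
        ∑ k ∈ range (n + 1), n.choose k * (2 ^ m * (-2) ^ k) *
          beta ((m + k : ℕ) + (v / 2 + 1 / 2)) (v / 2 + 1 / 2) := by
        rw [mul_sum]
        refine sum_congr rfl fun k _ => ?_
        have hterm := two_rpow_neg_mul_gbinom_mul_inv_gbinom hv (a := k + m) (by positivity)
        rw [show 2 * ((k : ℝ) + m) + v = 2 * k + 2 * m + v by ring, neg_add, ← sub_eq_add_neg,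
          show (k : ℝ) + m + v / 2 + 1 / 2 = (m + k : ℕ) + (v / 2 + 1 / 2) by push_cast; ring,
          rpow_add two_pos, rpow_add two_pos, rpow_natCast, rpow_natCast] at hterm
        rw [neg_pow (2 : ℝ)]
        linear_combination (-1) ^ k * (n.choose k : ℝ) * hterm
    _ = 2 ^ v * (Gamma (v / 2 + 1) / (√π * Gamma (v / 2 + 1 / 2))) *
        ∑ j ∈ range (m + 1), (-1) ^ j * m.choose j *
          betaMoment (v / 2 + 1 / 2) ((1 - 2 * X) ^ (n + j)) := by
        rw [← betaMoment_two_X_pow_mul_one_sub_two_X_pow_eq_sum_beta,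
          betaMoment_two_X_pow_mul_one_sub_two_X_pow_eq_sum_betaMoment]
    _ = _ := by
        rw [mul_sum]
        refine sum_congr rfl fun j _ => ?_
        rw [betaMoment_one_sub_two_X_pow hc]
        split_ifs with h
        · rw [centralTerm_eq hv h, show 1 - 2 * (v / 2 + 1 / 2) = -v by ring, rpow_neg two_pos.le]
          push_cast
          field_simp
        · ring

theorem knuth_old_sum_generalization (m n : ℕ) (v : ℝ) (hv : v > -1) :
    ∑ k ∈ Finset.range (n + 1),
      (-1 : ℝ) ^ k * (n.choose k : ℝ) * (2 : ℝ) ^ (-(k : ℝ) - (m : ℝ)) *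
        gbinom (2 * (k : ℝ) + 2 * (m : ℝ) + v) ((2 * (k : ℝ) + 2 * (m : ℝ) + v) / 2) *
        (gbinom ((k : ℝ) + (m : ℝ) + v) (v / 2))⁻¹
    = if Even n then
        ∑ k ∈ Finset.range (m / 2 + 1),
          (m.choose (2 * k) : ℝ) * (2 : ℝ) ^ (-(n : ℝ) - 2 * (k : ℝ)) *
            ((2 * k + n).choose ((2 * k + n) / 2) : ℝ) *
            (gbinom ((2 * (k : ℝ) + (n : ℝ) + v) / 2) ((2 * (k : ℝ) + (n : ℝ)) / 2))⁻¹
      else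
        -∑ k ∈ Finset.Icc 1 ((m + 1) / 2),
          (m.choose (2 * k - 1) : ℝ) * (2 : ℝ) ^ (-(n : ℝ) - 2 * (k : ℝ) + 1) *
            ((2 * k + n - 1).choose ((2 * k + n - 1) / 2) : ℝ) *
            (gbinom ((2 * (k : ℝ) + (n : ℝ) - 1 + v) / 2)
              ((2 * (k : ℝ) + (n : ℝ) - 1) / 2))⁻¹ := by
  rw [sum_gbinom_mul_inv_gbinom_eq_sum_centralTerm hv, sum_neg_one_pow_mul_choose_mul_ite_even]
  split_ifs
  · refine sum_congr rfl fun k _ => ?_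
    rw [centralTerm]
    push_cast
    ring_nf
  · refine congrArg _ (sum_congr rfl fun k hk => ?_)
    rw [centralTerm, Nat.cast_sub (by simp at hk; omega)]
    push_cast
    ring_nf
end

section
/- Let n be a nonnegative integer and let v > −1 be a real number. Then ∑_{k=1}^{⌈n/2⌉} C(n, 2k−1) · 2^{n−2k} · C(2k, k) · B((2k+v)/2, k)^{−1} = (1/2) · B(2n+v+2, (2n+v+2)/2) · B(n+v+1, v/2)^{−1} − B(2n+v, (2n+v)/2) · B(n+v, v/2)^{−1}. -/
/-!
With `w k = Γ(k + 1/2) / (√π Γ(k + v/2 + 1))`, each summand equals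
`2ⁿ Γ(v/2 + 1) C(n, 2k-1) w k`, and `w` satisfies the first-order recurrence `(2k + v + 2) w (k+1) = (2k + 1) w k`. Zeilberger's
algorithm then gives a telescoping certificate showing that `S n = ∑ᵢ C(n, 2i+1) w (i+1)` obeys
`n (n + v + 2) S (n+1) = (n + 1) (2n + v + 1) S n`, whence
`S n = n Γ(2n + v + 1) / (2ⁿ Γ(n + v/2 + 1) Γ(n + v + 2))` by induction from `S 1 = w 1`.
The right-hand side reduces to the same closed form using only `Γ(s + 1) = s Γ(s)`.
-/

open Real Finset

open scoped Nat

namespace OddIndexSum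

theorem Gamma_of_eq_add_one {s t : ℝ} (h : t = s + 1) (hs : 0 < s) : Gamma t = s * Gamma s :=
  h ▸ Gamma_add_one hs.ne'

theorem gbinom_eq {a b α β γ : ℝ} (hα : a + 1 = α) (hβ : b + 1 = β)
    (hγ : a - b + 1 = γ) :
    gbinom a b = Gamma α / (Gamma β * Gamma γ) := by
  subst hα hβ hγ; rfl

theorem two_rpow_sub_two_mul (n k : ℕ) : (2 : ℝ) ^ ((n : ℝ) - 2 * k) = 2 ^ n / 4 ^ k := by
  rw [rpow_sub two_pos, rpow_natCast, show (2 : ℝ) * k = (2 * k : ℕ) by push_cast; ring,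
    rpow_natCast, pow_mul]
  norm_num

theorem cast_choose_succ_mul (n k : ℕ) :
    (n.choose (k + 1) : ℝ) * (k + 1) = n.choose k * (n - k) := by
  rcases le_or_gt k n with hkn | hnk
  · have h := congrArg (Nat.cast : ℕ → ℝ) (Nat.choose_succ_right_eq n k)
    push_cast [Nat.cast_sub hkn] at h
    exact h
  · simp [Nat.choose_eq_zero_of_lt hnk, Nat.choose_eq_zero_of_lt (hnk.trans k.lt_succ_self)]

theorem sum_Icc_choose_two_mul_sub_one {R : Type*} [Semiring R] (n : ℕ) (f : ℕ → R) :
    ∑ k ∈ Icc 1 ((n + 1) / 2), (n.choose (2 * k - 1) : R) * f k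
      = ∑ i ∈ range n, (n.choose (2 * i + 1) : R) * f (i + 1) := by
  have hsub : Icc 1 ((n + 1) / 2) ⊆ Icc 1 n := Icc_subset_Icc_right (by omega)
  rw [sum_subset hsub fun k hk hk' => ?_, ← Ico_add_one_right_eq_Icc, sum_Ico_eq_sum_range]
  · refine sum_congr rfl fun i _ => ?_
    rw [show 2 * (1 + i) - 1 = 2 * i + 1 by omega, add_comm 1 i]
  · simp only [mem_Icc] at hk hk'
    simp [Nat.choose_eq_zero_of_lt (show n < 2 * k - 1 by omega)]

noncomputable def oddSum (g : ℕ → ℝ) (n : ℕ) : ℝ :=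
  ∑ i ∈ range n, (n.choose (2 * i + 1) : ℝ) * g (i + 1)

section Recurrence

variable {v : ℝ} {g : ℕ → ℝ}

/-- Zeilberger's certificate for the recurrence `oddSum_succ`. -/
noncomputable def certificate (g : ℕ → ℝ) (n i : ℕ) : ℝ :=
  -2 * (n + 1) * i * n.choose (2 * i) * g i

theorem certificate_sub (hg : ∀ i : ℕ, (2 * i + v + 2) * g (i + 1) = (2 * i + 1) * g i)
    (n i : ℕ) :
    n * (n + v + 2) * ((n + 1).choose (2 * i + 1) * g (i + 1))
      - (n + 1) * (2 * n + v + 1) * (n.choose (2 * i + 1) * g (i + 1))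
      = certificate g n (i + 1) - certificate g n i := by
  have h1 := cast_choose_succ_mul n (2 * i)
  have h2 := cast_choose_succ_mul n (2 * i + 1)
  push_cast at h1 h2
  have hpascal : ((n + 1).choose (2 * i + 1) : ℝ) = n.choose (2 * i) + n.choose (2 * i + 1) := by
    exact_mod_cast Nat.choose_succ_succ n (2 * i)
  have hi : (2 * i + 1 : ℝ) ≠ 0 := by positivity
  unfold certificate
  rw [hpascal, show 2 * (i + 1) = 2 * i + 1 + 1 by ring]
  refine mul_left_cancel₀ hi ?_
  push_cast
  linear_combination (n + 1) * (2 * i + 1) * g (i + 1) * h2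
    + (n * (n + v + 2) - (n + 1) * (2 * n + v + 1) + (n + 1) * (n - 2 * i - 1)) * g (i + 1) * h1
    + 2 * (n + 1) * i * n.choose (2 * i) * hg i

theorem oddSum_succ (hg : ∀ i : ℕ, (2 * i + v + 2) * g (i + 1) = (2 * i + 1) * g i) (n : ℕ) :
    n * (n + v + 2) * oddSum g (n + 1) = (n + 1) * (2 * n + v + 1) * oddSum g n := by
  have hlast : oddSum g n = ∑ i ∈ range (n + 1), (n.choose (2 * i + 1) : ℝ) * g (i + 1) := by
    simp [oddSum, sum_range_succ, Nat.choose_eq_zero_of_lt (show n < 2 * n + 1 by omega)]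
  have htelescope :
      n * (n + v + 2) * oddSum g (n + 1) - (n + 1) * (2 * n + v + 1) * oddSum g n
        = certificate g n (n + 1) - certificate g n 0 := by
    rw [hlast, oddSum, mul_sum, mul_sum, ← sum_sub_distrib, ← sum_range_sub]
    exact sum_congr rfl fun i _ => certificate_sub hg n i
  have hends : certificate g n (n + 1) - certificate g n 0 = 0 := by
    simp [certificate, Nat.choose_eq_zero_of_lt (show n < 2 * (n + 1) by omega)]
  linarith

end Recurrence

/-- `weight v k = Γ(k + 1/2) / (√π Γ(k + v/2 + 1))`, written without half-integer arguments. -/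
noncomputable def weight (v : ℝ) (k : ℕ) : ℝ :=
  (2 * k).choose k * k ! / (4 ^ k * Gamma (k + v / 2 + 1))

theorem weight_succ {v : ℝ} (hv : -2 < v) (k : ℕ) :
    (2 * k + v + 2) * weight v (k + 1) = (2 * k + 1) * weight v k := by
  have hcb : ((k + 1 : ℕ) : ℝ) * (2 * (k + 1)).choose (k + 1)
      = 2 * (2 * k + 1) * (2 * k).choose k := by
    exact_mod_cast Nat.succ_mul_centralBinom_succ k
  have hpos : 0 < (k : ℝ) + v / 2 + 1 := by have := k.cast_nonneg (α := ℝ); linarith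
  have hΓ : Gamma ((k + 1 : ℕ) + v / 2 + 1) = (k + v / 2 + 1) * Gamma (k + v / 2 + 1) :=
    Gamma_of_eq_add_one (by push_cast; ring) hpos
  have hΓpos := Gamma_pos_of_pos hpos
  unfold weight
  rw [hΓ, Nat.factorial_succ, pow_succ]
  push_cast at hcb ⊢
  rw [show ((2 * (k + 1)).choose (k + 1) : ℝ) * ((k + 1) * k !)
      = 2 * (2 * k + 1) * (2 * k).choose k * (k ! : ℝ) by rw [← hcb]; ring]
  rw [← mul_div_assoc, ← mul_div_assoc, div_eq_div_iff (by positivity) (by positivity)]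
  ring

theorem oddSum_weight {v : ℝ} (hv : -2 < v) (n : ℕ) :
    oddSum (weight v) n
      = n * Gamma (2 * n + v + 1) / (2 ^ n * Gamma (n + v / 2 + 1) * Gamma (n + v + 2)) := by
  rcases Nat.eq_zero_or_pos n with rfl | hn
  · simp [oddSum]
  induction n, hn using Nat.le_induction with
  | base =>
    have hΓ : Gamma (1 + v + 2) ≠ 0 := (Gamma_pos_of_pos (by linarith)).ne'
    simp only [oddSum, weight, range_one, sum_singleton]
    norm_num
    rw [show 2 + v + 1 = 1 + v + 2 by ring]
    field_simp
    norm_num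
  | succ n hn ih =>
    have hn' : (1 : ℝ) ≤ n := by exact_mod_cast hn
    have hrec := oddSum_succ (weight_succ hv) n
    rw [ih] at hrec
    have h₁ : (0 : ℝ) < n + v / 2 + 1 := by linarith
    have h₂ : (0 : ℝ) < n + v + 2 := by linarith
    have hΓ₀ : Gamma (2 * (n + 1 : ℕ) + v + 1) = (2 * n + v + 2) * Gamma (2 * n + v + 2) :=
      Gamma_of_eq_add_one (by push_cast; ring) (by linarith)
    have hΓ₁ : Gamma (2 * n + v + 2) = (2 * n + v + 1) * Gamma (2 * n + v + 1) :=
      Gamma_of_eq_add_one (by ring) (by linarith)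
    have hΓ₂ : Gamma ((n + 1 : ℕ) + v / 2 + 1) = (n + v / 2 + 1) * Gamma (n + v / 2 + 1) :=
      Gamma_of_eq_add_one (by push_cast; ring) h₁
    have hΓ₃ : Gamma ((n + 1 : ℕ) + v + 2) = (n + v + 2) * Gamma (n + v + 2) :=
      Gamma_of_eq_add_one (by push_cast; ring) h₂
    rw [hΓ₀, hΓ₁, hΓ₂, hΓ₃]
    apply mul_left_cancel₀ (mul_pos (by linarith : (0 : ℝ) < n) h₂).ne'
    have := (Gamma_pos_of_pos h₁).ne'
    have := (Gamma_pos_of_pos h₂).ne'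
    rw [hrec, mul_div_assoc', mul_div_assoc', div_eq_div_iff (by positivity) (by positivity)]
    push_cast
    ring

theorem summand_eq_weight (n k : ℕ) (v : ℝ) :
    (n.choose (2 * k - 1) : ℝ) * 2 ^ ((n : ℝ) - 2 * k) * (2 * k).choose k
        * (gbinom ((2 * k + v) / 2) k)⁻¹
      = 2 ^ n * Gamma (v / 2 + 1) * (n.choose (2 * k - 1) * weight v k) := by
  rw [gbinom_eq (α := k + v / 2 + 1) (β := k + 1) (γ := v / 2 + 1) (by ring) rfl (by ring),
    Gamma_nat_eq_factorial, two_rpow_sub_two_mul, inv_div, weight]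
  ring

theorem gbinom_ratio_sub_eq {v : ℝ} (hv : -1 < v) (n : ℕ) :
    (1 / 2) * gbinom (2 * n + v + 2) ((2 * n + v + 2) / 2) * (gbinom (n + v + 1) (v / 2))⁻¹
      - gbinom (2 * n + v) ((2 * n + v) / 2) * (gbinom (n + v) (v / 2))⁻¹
      = Gamma (v / 2 + 1)
        * (n * Gamma (2 * n + v + 1) / (Gamma (n + v / 2 + 1) * Gamma (n + v + 2))) := by
  have hn : (0 : ℝ) ≤ n := n.cast_nonneg
  have h₁ : (0 : ℝ) < n + v / 2 + 1 := by linarith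
  have h₂ : (0 : ℝ) < n + v + 1 := by linarith
  have hΓ₁ : Gamma (2 * n + v + 3) = (2 * n + v + 2) * Gamma (2 * n + v + 2) :=
    Gamma_of_eq_add_one (by ring) (by linarith)
  have hΓ₂ : Gamma (2 * n + v + 2) = (2 * n + v + 1) * Gamma (2 * n + v + 1) :=
    Gamma_of_eq_add_one (by ring) (by linarith)
  have hΓ₃ : Gamma (n + v / 2 + 2) = (n + v / 2 + 1) * Gamma (n + v / 2 + 1) :=
    Gamma_of_eq_add_one (by ring) h₁
  have hΓ₄ : Gamma (n + v + 2) = (n + v + 1) * Gamma (n + v + 1) :=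
    Gamma_of_eq_add_one (by ring) h₂
  rw [gbinom_eq (α := 2 * n + v + 3) (β := n + v / 2 + 2) (γ := n + v / 2 + 2) (by ring) (by ring)
      (by ring),
    gbinom_eq (α := n + v + 2) (β := v / 2 + 1) (γ := n + v / 2 + 2) (by ring) rfl (by ring),
    gbinom_eq (α := 2 * n + v + 1) (β := n + v / 2 + 1) (γ := n + v / 2 + 1) rfl (by ring) (by ring),
    gbinom_eq (α := n + v + 1) (β := v / 2 + 1) (γ := n + v / 2 + 1) rfl rfl (by ring),
    hΓ₁, hΓ₂, hΓ₃, hΓ₄]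
  have := (Gamma_pos_of_pos h₁).ne'
  have := (Gamma_pos_of_pos h₂).ne'
  have : (2 * n + v + 2 : ℝ) ≠ 0 := by linarith
  field_simp
  ring

end OddIndexSum

open OddIndexSum in
theorem odd_index_sum_identity (n : ℕ) (v : ℝ) (hv : v > -1) :
    ∑ k ∈ Finset.Icc 1 ((n + 1) / 2),
      (n.choose (2 * k - 1) : ℝ) * (2 : ℝ) ^ ((n : ℝ) - 2 * (k : ℝ)) *
        ((2 * k).choose k : ℝ) * (gbinom ((2 * (k : ℝ) + v) / 2) (k : ℝ))⁻¹
    = (1 / 2) * gbinom (2 * (n : ℝ) + v + 2) ((2 * (n : ℝ) + v + 2) / 2) *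
        (gbinom ((n : ℝ) + v + 1) (v / 2))⁻¹
      - gbinom (2 * (n : ℝ) + v) ((2 * (n : ℝ) + v) / 2) *
        (gbinom ((n : ℝ) + v) (v / 2))⁻¹ := by
  rw [sum_congr rfl fun k _ => summand_eq_weight n k v, ← mul_sum, sum_Icc_choose_two_mul_sub_one,
    ← oddSum, oddSum_weight (by linarith), gbinom_ratio_sub_eq hv]
  field_simp
end

section
/- For every nonnegative integer n, ∑_{k=1}^{⌈n/2⌉} C(n, 2k−1) · 2^{n−2k} · Cat(k) = (1/2) · Cat(n+2) − Cat(n+1), as an identity of rational numbers (2^{n−2k} denotes the rational number 2^n/2^{2k}). -/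
/-!
Touchard's identity `Cat(n+1) = ∑ₖ C(n, 2k) 2^(n-2k) Cat(k)` is proved by Zeilberger's method:
the summands `F(n, k)` satisfy `(n+3) F(n+1, k) - 2(2n+3) F(n, k) = G(n, k) - G(n, k+1)` for an
explicit certificate `G` vanishing at both ends, so the Touchard sums obey the recurrence
`(n+3) T(n+1) = 2(2n+3) T(n)` of `Cat(n+1)`. Pascal's rule `C(n+1, 2k) = C(n, 2k) + C(n, 2k-1)`
splits `T(n+1)` into `2 T(n)` plus twice the odd sum of the theorem, which is therefore
`Cat(n+2)/2 - Cat(n+1)`.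
-/

/-- The Catalan number `Cat(j) = C(2j, j)/(j+1)` as a rational number. -/
def catalanQ (j : ℕ) : ℚ := ((2 * j).choose j : ℚ) / ((j : ℚ) + 1)

open Finset

theorem Nat.cast_choose_succ_right_eq {R : Type*} [Ring R] (n m : ℕ) :
    (n.choose (m + 1) : R) * (m + 1) = n.choose m * (n - m) := by
  rcases le_or_gt m n with h | h
  · have := congrArg (Nat.cast (R := R)) (Nat.choose_succ_right_eq n m)
    push_cast [Nat.cast_sub h] at this
    exact this
  · simp [Nat.choose_eq_zero_of_lt h, Nat.choose_eq_zero_of_lt (Nat.lt_succ_of_lt h)]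

theorem catalanQ_succ (j : ℕ) :
    catalanQ (j + 1) = 2 * (2 * j + 1) / (j + 2) * catalanQ j := by
  have h : ((j + 1 : ℕ) : ℚ) * (j + 1).centralBinom = 2 * (2 * j + 1) * j.centralBinom := by
    exact_mod_cast Nat.succ_mul_centralBinom_succ j
  simp only [catalanQ, ← Nat.centralBinom_eq_two_mul_choose]
  push_cast at h ⊢
  field_simp
  linear_combination (j + 2 : ℚ) * h

def touchardTerm (n k : ℕ) : ℚ :=
  (n.choose (2 * k) : ℚ) * ((2 : ℚ) ^ n / (2 : ℚ) ^ (2 * k)) * catalanQ k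

def touchardCert (n k : ℕ) : ℚ :=
  8 * k * (k + 1) * ((n + 1).choose (2 * k) : ℚ) * ((2 : ℚ) ^ n / (2 : ℚ) ^ (2 * k))
    * catalanQ k / (n + 1)

theorem touchardTerm_telescope (n k : ℕ) :
    (n + 3) * touchardTerm (n + 1) k - 2 * (2 * n + 3) * touchardTerm n k
      = touchardCert n k - touchardCert n (k + 1) := by
  have h₁ := Nat.cast_choose_succ_right_eq (R := ℚ) (n + 1) (2 * k)
  have h₂ := Nat.cast_choose_succ_right_eq (R := ℚ) (n + 1) (2 * k + 1)
  have h₃ : ((n + 1 : ℕ) : ℚ) * n.choose (2 * k) = (n + 1).choose (2 * k + 1) * (2 * k + 1) :=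
    mod_cast Nat.add_one_mul_choose_eq n (2 * k)
  simp only [touchardTerm, touchardCert, catalanQ_succ, show 2 * (k + 1) = 2 * k + 1 + 1 by ring]
  push_cast at h₁ h₂ h₃ ⊢
  field_simp
  -- up to the factor `2^n / 4^k · Cat k`, a linear relation among neighbouring binomials
  linear_combination (4 * catalanQ k * 2 ^ n * 2 ^ (2 * k) * (k + 2)) *
    (2 * (2 * k + 1) * h₂ - 2 * (2 * n + 3) * h₃ - 2 * (n + 2 * k + 3) * h₁)

theorem touchardTerm_eq_zero {n k : ℕ} (h : n < 2 * k) : touchardTerm n k = 0 := by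
  simp [touchardTerm, Nat.choose_eq_zero_of_lt h]

theorem touchardCert_zero (n : ℕ) : touchardCert n 0 = 0 := by
  simp [touchardCert]

theorem touchardCert_eq_zero {n k : ℕ} (h : n + 1 < 2 * k) : touchardCert n k = 0 := by
  simp [touchardCert, Nat.choose_eq_zero_of_lt h]

def touchardSum (n : ℕ) : ℚ := ∑ k ∈ range (n / 2 + 1), touchardTerm n k

theorem touchardSum_eq_sum_range {n N : ℕ} (h : n / 2 < N) :
    touchardSum n = ∑ k ∈ range N, touchardTerm n k :=
  sum_subset (range_subset_range.2 (by omega)) fun _ _ hk ↦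
    touchardTerm_eq_zero (by simp only [mem_range] at hk; omega)

theorem add_three_mul_touchardSum_succ (n : ℕ) :
    (n + 3) * touchardSum (n + 1) = 2 * (2 * n + 3) * touchardSum n := by
  rw [touchardSum_eq_sum_range (N := n + 2) (by omega),
    touchardSum_eq_sum_range (N := n + 2) (by omega), ← sub_eq_zero, mul_sum, mul_sum,
    ← sum_sub_distrib]
  simp only [touchardTerm_telescope]
  rw [sum_range_sub', touchardCert_zero, touchardCert_eq_zero (by omega), sub_zero]

theorem touchardSum_eq_catalanQ (n : ℕ) : touchardSum n = catalanQ (n + 1) := by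
  induction n with
  | zero => norm_num [touchardSum, touchardTerm, catalanQ]
  | succ n ih =>
    apply mul_left_cancel₀ (show (n : ℚ) + 3 ≠ 0 by positivity)
    rw [add_three_mul_touchardSum_succ, ih, catalanQ_succ (n + 1)]
    push_cast
    field_simp
    ring

def oddTouchardTerm (n k : ℕ) : ℚ :=
  (n.choose (2 * k - 1) : ℚ) * ((2 : ℚ) ^ n / (2 : ℚ) ^ (2 * k)) * catalanQ k

theorem touchardTerm_succ {n k : ℕ} (hk : 0 < k) :
    touchardTerm (n + 1) k = 2 * touchardTerm n k + 2 * oddTouchardTerm n k := by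
  simp only [touchardTerm, oddTouchardTerm, Nat.choose_succ_left n (2 * k) (by omega)]
  push_cast
  ring

theorem touchardSum_succ (n : ℕ) :
    touchardSum (n + 1) =
      2 * touchardSum n + 2 * ∑ k ∈ Icc 1 ((n + 1) / 2), oddTouchardTerm n k := by
  have hodd : ∑ k ∈ Icc 1 ((n + 1) / 2), oddTouchardTerm n k
      = ∑ k ∈ Ico 1 (n + 2), oddTouchardTerm n k :=
    sum_subset (fun k hk ↦ by simp only [mem_Icc, mem_Ico] at hk ⊢; omega) fun k hk hk' ↦ by
      simp only [mem_Icc, mem_Ico] at hk hk'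
      simp [oddTouchardTerm, Nat.choose_eq_zero_of_lt (show n < 2 * k - 1 by omega)]
  rw [touchardSum_eq_sum_range (N := n + 2) (by omega),
    touchardSum_eq_sum_range (N := n + 2) (by omega), hodd, range_eq_Ico,
    sum_eq_sum_Ico_succ_bot (f := touchardTerm (n + 1)) (by omega),
    sum_eq_sum_Ico_succ_bot (f := touchardTerm n) (by omega), mul_add, mul_sum,
    mul_sum, add_assoc, ← sum_add_distrib]
  congr 1
  · simp only [touchardTerm, mul_zero, Nat.choose_zero_right, pow_succ]
    ring
  · exact sum_congr rfl fun k hk ↦ touchardTerm_succ (by simp only [mem_Ico] at hk; omega)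

theorem odd_binom_catalan_sum (n : ℕ) :
    ∑ k ∈ Finset.Icc 1 ((n + 1) / 2),
      (n.choose (2 * k - 1) : ℚ) * ((2 : ℚ) ^ n / (2 : ℚ) ^ (2 * k)) * catalanQ k
    = (1 / 2) * catalanQ (n + 2) - catalanQ (n + 1) := by
  have h := touchardSum_succ n
  rw [touchardSum_eq_catalanQ, touchardSum_eq_catalanQ] at h
  simp only [oddTouchardTerm] at h
  linarith
end

section
/- For every nonnegative integer n, ∑_{k=0}^{n} (−1)^k · C(2k, k) · C(2(n−k), n−k) equals 2^n · C(n, n/2) if n is even, and equals 0 if n is odd. -/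
/-!
Let `A = ∑ C(2k, k) Xᵏ`, so that the sum is the coefficient of `Xⁿ` in `A(-X) A(X)`.
Since `(1 - 4X) A' = 2A`, the product `F = A(-X) A(X)` satisfies `(1 - 16X²) F' = 16X F`, and so
does `A(4X²)`, whose coefficients are the right-hand side. Both have constant term `1`, and a
linear first order differential equation whose leading coefficient is a unit has at most one
power series solution with a given constant term.
-/

namespace PowerSeries

variable {R : Type*} [CommRing R]

theorem derivative_rescale (a : R) (f : R⟦X⟧) :
    d⁄dX R (rescale a f) = C a * rescale a (d⁄dX R f) := by
  ext n
  simp only [coeff_derivative, coeff_rescale, coeff_C_mul, pow_succ]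
  ring

theorem eq_zero_of_derivative_eq_mul [IsAddTorsionFree R] {f r : R⟦X⟧}
    (hf : d⁄dX R f = r * f) (h0 : constantCoeff f = 0) : f = 0 := by
  ext n
  induction n using Nat.strong_induction_on with
  | _ n ih =>
  cases n with
  | zero => simpa using h0
  | succ n =>
    have : (n + 1) • coeff (n + 1) f = 0 := by
      rw [nsmul_eq_mul', Nat.cast_succ, ← coeff_derivative, hf, coeff_mul]
      refine Finset.sum_eq_zero fun ij hij => ?_
      rw [ih ij.2 (Finset.Nat.antidiagonal.snd_lt hij), map_zero, mul_zero]
    rw [map_zero, ← nsmul_eq_zero_iff_right n.succ_ne_zero, this]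

theorem eq_of_mul_derivative_eq_mul [IsAddTorsionFree R] {p q f g : R⟦X⟧} (hp : IsUnit p)
    (hf : p * d⁄dX R f = q * f) (hg : p * d⁄dX R g = q * g)
    (h0 : constantCoeff f = constantCoeff g) : f = g := by
  obtain ⟨u, rfl⟩ := hp
  refine sub_eq_zero.1 (eq_zero_of_derivative_eq_mul (r := ↑u⁻¹ * q) ?_ (by simp [h0]))
  rw [map_sub, mul_assoc, mul_sub, ← hf, ← hg, ← mul_sub, ← mul_assoc, Units.inv_mul, one_mul]

end PowerSeries

open PowerSeries

section

variable (R : Type*) [CommRing R]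

noncomputable def centralBinomSeries : R⟦X⟧ :=
  mk fun n => (n.centralBinom : R)

/-- `A(4X²)` for `A = centralBinomSeries R`: its coefficient of `X^(2m)` is `4^m C(2m, m)`. -/
noncomputable def evenCentralBinomSeries : R⟦X⟧ :=
  mk fun n => if Even n then 2 ^ n * (n.choose (n / 2) : R) else 0

variable {R}

theorem one_sub_four_X_mul_derivative_centralBinomSeries :
    (1 - 4 * X) * d⁄dX R (centralBinomSeries R) = 2 * centralBinomSeries R := by
  ext n
  rw [sub_mul, one_mul, mul_assoc, ← map_ofNat C 4, ← map_ofNat C 2, map_sub, coeff_C_mul,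
    coeff_C_mul]
  cases n with
  | zero => norm_num [coeff_derivative, centralBinomSeries, Nat.centralBinom]
  | succ n =>
    have h := congrArg (Nat.cast : ℕ → R) (Nat.succ_mul_centralBinom_succ (n + 1))
    push_cast at h
    simp only [coeff_succ_X_mul, coeff_derivative, centralBinomSeries, coeff_mk]
    push_cast
    linear_combination h

theorem coeff_evenCentralBinomSeries_add_two (k : ℕ) :
    (k + 2) * coeff (k + 2) (evenCentralBinomSeries R)
      = 16 * (k + 1) * coeff k (evenCentralBinomSeries R) := by
  simp only [evenCentralBinomSeries, coeff_mk]
  rcases Nat.even_or_odd k with ⟨j, rfl⟩ | hodd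
  · have h := congrArg (Nat.cast : ℕ → R) (Nat.succ_mul_centralBinom_succ j)
    simp only [Nat.centralBinom_eq_two_mul_choose] at h
    rw [if_pos (by exact ⟨j + 1, by ring⟩), if_pos ⟨j, rfl⟩, show (j + j + 2) / 2 = j + 1 by omega,
      show (j + j) / 2 = j by omega, show j + j + 2 = 2 * (j + 1) by ring, show j + j = 2 * j by ring]
    push_cast at h ⊢
    linear_combination (2 : R) ^ (2 * j) * 8 * h
  · have hk : ¬ Even k := Nat.not_even_iff_odd.2 hodd
    simp [Nat.even_add, hk]

theorem one_sub_sixteen_X_sq_mul_derivative_evenCentralBinomSeries :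
    (1 - 16 * X ^ 2) * d⁄dX R (evenCentralBinomSeries R) = 16 * X * evenCentralBinomSeries R := by
  ext n
  rw [sub_mul, one_mul, pow_two, mul_assoc, mul_assoc, mul_assoc, ← map_ofNat C 16, map_sub,
    coeff_C_mul, coeff_C_mul]
  rcases n with _ | _ | n
  · simp [coeff_derivative, evenCentralBinomSeries]
  · norm_num [coeff_derivative, evenCentralBinomSeries]
  · simp only [coeff_succ_X_mul, coeff_derivative]
    have h := coeff_evenCentralBinomSeries_add_two (R := R) (n + 1)
    push_cast at h ⊢
    linear_combination h

theorem one_sub_sixteen_X_sq_mul_derivative_rescale_neg_one_centralBinomSeries_mul_self :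
    (1 - 16 * X ^ 2) * d⁄dX R (rescale (-1) (centralBinomSeries R) * centralBinomSeries R)
      = 16 * X * (rescale (-1) (centralBinomSeries R) * centralBinomSeries R) := by
  set A := centralBinomSeries R
  have hA : (1 - 4 * X) * d⁄dX R A = 2 * A := one_sub_four_X_mul_derivative_centralBinomSeries
  have hA' : (1 + 4 * X) * rescale (-1) (d⁄dX R A) = 2 * rescale (-1) A := by
    simpa [rescale_X, map_ofNat] using congrArg (rescale (-1 : R)) hA
  rw [Derivation.leibniz, derivative_rescale, smul_eq_mul, smul_eq_mul, map_neg, map_one]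
  linear_combination (1 + 4 * X) * rescale (-1) A * hA - (1 - 4 * X) * A * hA'

theorem rescale_neg_one_centralBinomSeries_mul_self [IsAddTorsionFree R] :
    rescale (-1) (centralBinomSeries R) * centralBinomSeries R = evenCentralBinomSeries R :=
  eq_of_mul_derivative_eq_mul (by simp [isUnit_iff_constantCoeff])
    one_sub_sixteen_X_sq_mul_derivative_rescale_neg_one_centralBinomSeries_mul_self
    one_sub_sixteen_X_sq_mul_derivative_evenCentralBinomSeries
    (by simp [centralBinomSeries, evenCentralBinomSeries, rescale_mk])

end

theorem alternating_central_binomial_convolution (n : ℕ) :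
    ∑ k ∈ Finset.range (n + 1),
      (-1 : ℤ) ^ k * ((2 * k).choose k : ℤ) * ((2 * (n - k)).choose (n - k) : ℤ)
    = if Even n then 2 ^ n * (n.choose (n / 2) : ℤ) else 0 := by
  have h := congrArg (coeff n) (rescale_neg_one_centralBinomSeries_mul_self (R := ℤ))
  rw [coeff_mul, Finset.Nat.sum_antidiagonal_eq_sum_range_succ_mk] at h
  simpa [centralBinomSeries, evenCentralBinomSeries, coeff_rescale,
    Nat.centralBinom_eq_two_mul_choose] using h
end

section
/- For every nonnegative integer n, ∑_{k=0}^{n} C(2(n−k), n−k) · C(2k, k) = 2^{2n}. -/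
/-!
Write `S n = ∑_{i+j=n} c i * c j` for the central binomial coefficients `c` and
`T n = ∑_{i+j=n} i * c i * c j`. Symmetry of the antidiagonal gives `2 T n = n S n`, and the
recurrence `(i + 1) c (i + 1) = 2 (2i + 1) c i` gives `T (n + 1) = 4 T n + 2 S n`. Together
they yield `(n + 1) S (n + 1) = 4 (n + 1) S n`, so `S n = 4 ^ n`.
-/

open Finset Nat

theorem Finset.Nat.two_mul_sum_antidiagonal_fst_mul {R : Type*} [CommSemiring R] (f : ℕ → R)
    (n : ℕ) :
    2 * ∑ p ∈ antidiagonal n, (p.1 : R) * (f p.1 * f p.2)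
      = n * ∑ p ∈ antidiagonal n, f p.1 * f p.2 := by
  have swap_sum : ∑ p ∈ antidiagonal n, (p.1 : R) * (f p.1 * f p.2)
      = ∑ p ∈ antidiagonal n, (p.2 : R) * (f p.1 * f p.2) := by
    rw [← Finset.Nat.sum_antidiagonal_swap]
    exact sum_congr rfl fun p _ => by rw [Prod.fst_swap, Prod.snd_swap, mul_comm (f p.2)]
  rw [two_mul]
  nth_rw 2 [swap_sum]
  rw [← sum_add_distrib, mul_sum]
  refine sum_congr rfl fun p hp => ?_
  rw [← add_mul, ← cast_add, mem_antidiagonal.mp hp]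

theorem Nat.sum_antidiagonal_succ_fst_mul_centralBinom_mul (n : ℕ) :
    ∑ p ∈ antidiagonal (n + 1), p.1 * (centralBinom p.1 * centralBinom p.2)
      = 4 * ∑ p ∈ antidiagonal n, p.1 * (centralBinom p.1 * centralBinom p.2)
        + 2 * ∑ p ∈ antidiagonal n, centralBinom p.1 * centralBinom p.2 := by
  rw [Finset.Nat.sum_antidiagonal_succ, zero_mul, zero_add, mul_sum, mul_sum,
    ← sum_add_distrib]
  refine sum_congr rfl fun p _ => ?_
  rw [← mul_assoc, succ_mul_centralBinom_succ]
  ring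

theorem Nat.sum_antidiagonal_centralBinom_mul (n : ℕ) :
    ∑ p ∈ antidiagonal n, centralBinom p.1 * centralBinom p.2 = 4 ^ n := by
  induction n with
  | zero => simp
  | succ n ih =>
    set S := fun m => ∑ p ∈ antidiagonal m, centralBinom p.1 * centralBinom p.2
    set T := fun m => ∑ p ∈ antidiagonal m, p.1 * (centralBinom p.1 * centralBinom p.2)
    have hT : ∀ m, 2 * T m = m * S m := fun m => by
      exact_mod_cast Finset.Nat.two_mul_sum_antidiagonal_fst_mul (R := ℕ) centralBinom m
    have key : (n + 1) * S (n + 1) = (n + 1) * (4 * S n) :=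
      calc (n + 1) * S (n + 1) = 2 * T (n + 1) := (hT (n + 1)).symm
        _ = 4 * (2 * T n) + 4 * S n := by
          simp only [T, S, sum_antidiagonal_succ_fst_mul_centralBinom_mul]; ring
        _ = (n + 1) * (4 * S n) := by rw [hT]; ring
    change S (n + 1) = 4 ^ (n + 1)
    rw [Nat.eq_of_mul_eq_mul_left n.succ_pos key, pow_succ', ← ih]

theorem central_binomial_convolution (n : ℕ) :
    ∑ k ∈ Finset.range (n + 1), (2 * (n - k)).choose (n - k) * (2 * k).choose k
    = 2 ^ (2 * n) := by
  rw [pow_mul, show (2 : ℕ) ^ 2 = 4 from rfl, ← sum_antidiagonal_centralBinom_mul,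
    Finset.Nat.sum_antidiagonal_eq_sum_range_succ (fun i j => centralBinom i * centralBinom j)]
  exact sum_congr rfl fun k _ => mul_comm _ _
end

section
/- Let n be a nonnegative integer and let v > −1 be a real number. Then ∑_{k=0}^{n} (−1)^k · C(n,k) · B(2k+v, (2k+v)/2) · B(2n−2k+v, (2n−2k+v)/2) · B(n+v, (2k+v)/2)^{−1} equals 2^n · C(n, n/2) · B(v, v/2) · B((n+v)/2, v/2)^{−1} if n is even, and equals 0 if n is odd. -/
/-!
Put `c = (v + 1) / 2`. Legendre's duplication formula gives
`B(x, x/2) = 2^x Γ((x+1)/2) / (√π Γ(x/2+1))`, so the `k`-th summand is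
`(-1)^k C(n,k) (c)_k (c)_{n-k}` times `2^(2n+2v) Γ(c)² / (π Γ(n+v+1))`, which does not depend
on `k`.

The alternating convolution `T n = ∑_{i+j=n} (-1)^i C(n,i) (c)_i (c)_j` of rising factorials
satisfies `T (n+2) = (n+1)(n+2c) T n`: Pascal's rule turns `T (n+1)` into the same sum weighted
by `j - i`, and absorbing the weights `i`, `j` into the binomial coefficients gives back `T n`
with weight `(n+1)(2c+i+j)`. Since `T 0 = 1` and `T 1 = 0`, `T` vanishes at odd `n` and
`T (2m) = C(2m,m) m! (c)_m`; the duplication formula applied to `Γ(2m+v+1)` then yields the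
right-hand side.
-/

open Real

open Finset

theorem Finset.Nat.sum_antidiagonal_succ_choose_mul_fst {R : Type*} [Semiring R]
    (f : ℕ → ℕ → R) (n : ℕ) :
    ∑ ij ∈ antidiagonal (n + 1), ((n + 1).choose ij.1 : R) * ij.1 * f ij.1 ij.2 =
      (n + 1) * ∑ ij ∈ antidiagonal n, (n.choose ij.1 : R) * f (ij.1 + 1) ij.2 := by
  rw [Nat.sum_antidiagonal_succ, mul_sum]
  simp only [Nat.cast_zero, mul_zero, zero_mul, zero_add, ← mul_assoc]
  refine sum_congr rfl fun ij _ => ?_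
  have := congrArg (Nat.cast : ℕ → R) (Nat.add_one_mul_choose_eq n ij.1)
  push_cast at this
  rw [Nat.cast_add_one, this]

theorem Finset.Nat.sum_antidiagonal_succ_choose_mul_snd {R : Type*} [Semiring R]
    (f : ℕ → ℕ → R) (n : ℕ) :
    ∑ ij ∈ antidiagonal (n + 1), ((n + 1).choose ij.1 : R) * ij.2 * f ij.1 ij.2 =
      (n + 1) * ∑ ij ∈ antidiagonal n, (n.choose ij.1 : R) * f ij.1 (ij.2 + 1) := by
  rw [Nat.sum_antidiagonal_succ', mul_sum]
  simp only [Nat.cast_zero, mul_zero, zero_mul, zero_add, ← mul_assoc]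
  refine sum_congr rfl fun ij hij => ?_
  have hj : n + 1 - ij.1 = ij.2 + 1 := by rw [← mem_antidiagonal.mp hij]; omega
  have := congrArg (Nat.cast : ℕ → R) (hj ▸ Nat.choose_mul_succ_eq n ij.1)
  push_cast at this
  rw [Nat.cast_add_one, ← this, ← Nat.cast_add_one, Nat.cast_comm]

noncomputable section AlternatingPochhammer

variable {R : Type*} [CommRing R]

def signedPochhammerProd (c : R) (i j : ℕ) : R :=
  (-1) ^ i * (ascPochhammer R i).eval c * (ascPochhammer R j).eval c

theorem signedPochhammerProd_succ_left (c : R) (i j : ℕ) :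
    signedPochhammerProd c (i + 1) j = -(signedPochhammerProd c i j * (c + i)) := by
  simp only [signedPochhammerProd, ascPochhammer_succ_eval]
  ring

theorem signedPochhammerProd_succ_right (c : R) (i j : ℕ) :
    signedPochhammerProd c i (j + 1) = signedPochhammerProd c i j * (c + j) := by
  simp only [signedPochhammerProd, ascPochhammer_succ_eval]
  ring

def alternatingPochhammerConvolution (c : R) (n : ℕ) : R :=
  ∑ ij ∈ antidiagonal n, (n.choose ij.1 : R) * signedPochhammerProd c ij.1 ij.2

theorem alternatingPochhammerConvolution_succ (c : R) (n : ℕ) :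
    alternatingPochhammerConvolution c (n + 1) =
      ∑ ij ∈ antidiagonal n,
        (n.choose ij.1 : R) * (ij.2 - ij.1) * signedPochhammerProd c ij.1 ij.2 := by
  rw [alternatingPochhammerConvolution, sum_antidiagonal_choose_succ_mul, ← sum_add_distrib]
  refine sum_congr rfl fun ij hij => ?_
  rw [← Nat.choose_symm_of_eq_add (mem_antidiagonal.mp hij).symm,
    signedPochhammerProd_succ_left, signedPochhammerProd_succ_right]
  ring

theorem sum_antidiagonal_choose_mul_sub_mul_signedPochhammerProd (c : R) (n : ℕ) :
    ∑ ij ∈ antidiagonal (n + 1),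
        ((n + 1).choose ij.1 : R) * (ij.2 - ij.1) * signedPochhammerProd c ij.1 ij.2 =
      (n + 1) * (n + 2 * c) * alternatingPochhammerConvolution c n := by
  simp only [mul_sub, sub_mul, sum_sub_distrib]
  rw [Nat.sum_antidiagonal_succ_choose_mul_fst, Nat.sum_antidiagonal_succ_choose_mul_snd,
    ← mul_sub, ← sum_sub_distrib, mul_assoc]
  congr 1
  rw [alternatingPochhammerConvolution, mul_sum]
  refine sum_congr rfl fun ij hij => ?_
  rw [signedPochhammerProd_succ_left, signedPochhammerProd_succ_right,
    ← mem_antidiagonal.mp hij]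
  push_cast
  ring

theorem alternatingPochhammerConvolution_add_two (c : R) (n : ℕ) :
    alternatingPochhammerConvolution c (n + 2) =
      (n + 1) * (n + 2 * c) * alternatingPochhammerConvolution c n := by
  rw [alternatingPochhammerConvolution_succ,
    sum_antidiagonal_choose_mul_sub_mul_signedPochhammerProd]

theorem alternatingPochhammerConvolution_two_mul_add_one (c : R) (m : ℕ) :
    alternatingPochhammerConvolution c (2 * m + 1) = 0 := by
  induction m with
  | zero => simp [alternatingPochhammerConvolution_succ]
  | succ m ih => rw [show 2 * (m + 1) + 1 = 2 * m + 1 + 2 by ring,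
      alternatingPochhammerConvolution_add_two, ih, mul_zero]

theorem alternatingPochhammerConvolution_two_mul (c : R) (m : ℕ) :
    alternatingPochhammerConvolution c (2 * m) =
      m.centralBinom * m.factorial * (ascPochhammer R m).eval c := by
  induction m with
  | zero => simp [alternatingPochhammerConvolution, signedPochhammerProd]
  | succ m ih =>
    have h := congrArg (Nat.cast : ℕ → R) (Nat.succ_mul_centralBinom_succ m)
    push_cast at h
    rw [show 2 * (m + 1) = 2 * m + 2 by ring, alternatingPochhammerConvolution_add_two, ih,
      Nat.factorial_succ, ascPochhammer_succ_eval]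
    push_cast
    linear_combination (-(m.factorial : R) * (ascPochhammer R m).eval c * (c + m)) * h

end AlternatingPochhammer

namespace Real

theorem Gamma_add_nat_eq_ascPochhammer_mul {s : ℝ} (hs : ∀ k : ℕ, s ≠ -k) (n : ℕ) :
    Gamma (s + n) = (ascPochhammer ℝ n).eval s * Gamma s := by
  induction n with
  | zero => simp
  | succ n ih =>
    have hsn : s + n ≠ 0 := fun h => hs n (eq_neg_of_add_eq_zero_left h)
    rw [Nat.cast_succ, ← add_assoc, Gamma_add_one hsn, ih, ascPochhammer_succ_eval]
    ring

theorem Gamma_two_mul_add_one (z : ℝ) :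
    Gamma (2 * z + 1) = 2 ^ (2 * z) * Gamma (z + 1 / 2) * Gamma (z + 1) / √π := by
  have h := Gamma_mul_Gamma_add_half (z + 1 / 2)
  rw [show z + 1 / 2 + 1 / 2 = z + 1 by ring, show 2 * (z + 1 / 2) = 2 * z + 1 by ring,
    show 1 - (2 * z + 1) = -(2 * z) by ring, rpow_neg zero_le_two] at h
  have h2 : (2 : ℝ) ^ (2 * z) ≠ 0 := (rpow_pos_of_pos two_pos _).ne'
  have hpi : √π ≠ 0 := (sqrt_pos.mpr pi_pos).ne'
  rw [mul_assoc (2 ^ (2 * z)), h]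
  field_simp

end Real

theorem gbinom_self_half {x : ℝ} (hx : -2 < x) :
    gbinom x (x / 2) = 2 ^ x * Gamma ((x + 1) / 2) / (√π * Gamma (x / 2 + 1)) := by
  have hG : Gamma (x / 2 + 1) ≠ 0 := (Gamma_pos_of_pos (by linarith)).ne'
  have hpi : √π ≠ 0 := (sqrt_pos.mpr pi_pos).ne'
  have h := Gamma_two_mul_add_one (x / 2)
  rw [show 2 * (x / 2) = x by ring, show x / 2 + 1 / 2 = (x + 1) / 2 by ring] at h
  rw [gbinom, show x - x / 2 = x / 2 by ring, h]
  field_simp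

theorem gbinom_self_half_mul_gbinom_self_half_mul_inv {x y : ℝ} (hx : -2 < x) (hy : -2 < y) :
    gbinom x (x / 2) * gbinom y (y / 2) * (gbinom ((x + y) / 2) (x / 2))⁻¹ =
      2 ^ (x + y) * Gamma ((x + 1) / 2) * Gamma ((y + 1) / 2) / (π * Gamma ((x + y) / 2 + 1)) := by
  have hGx : Gamma (x / 2 + 1) ≠ 0 := (Gamma_pos_of_pos (by linarith)).ne'
  have hGy : Gamma (y / 2 + 1) ≠ 0 := (Gamma_pos_of_pos (by linarith)).ne'
  have hpi : √π ≠ 0 := (sqrt_pos.mpr pi_pos).ne'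
  rw [gbinom_self_half hx, gbinom_self_half hy, gbinom, inv_div,
    show (x + y) / 2 - x / 2 = y / 2 by ring, rpow_add two_pos]
  generalize Gamma (x / 2 + 1) = gx at *
  generalize Gamma (y / 2 + 1) = gy at *
  field_simp
  rw [sq_sqrt pi_pos.le]
  ring

theorem sum_gbinom_eq_mul_alternatingPochhammerConvolution (n : ℕ) {v : ℝ} (hv : -1 < v) :
    ∑ k ∈ range (n + 1),
      (-1 : ℝ) ^ k * (n.choose k : ℝ) * gbinom (2 * (k : ℝ) + v) ((2 * (k : ℝ) + v) / 2) *
        gbinom (2 * (n : ℝ) - 2 * (k : ℝ) + v) ((2 * (n : ℝ) - 2 * (k : ℝ) + v) / 2) *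
        (gbinom ((n : ℝ) + v) ((2 * (k : ℝ) + v) / 2))⁻¹ =
      2 ^ (2 * (n : ℝ) + 2 * v) * Gamma ((v + 1) / 2) ^ 2 / (π * Gamma (n + v + 1)) *
        alternatingPochhammerConvolution ((v + 1) / 2) n := by
  have hc : ∀ k : ℕ, (v + 1) / 2 ≠ -k := fun k h => by linarith [k.cast_nonneg (α := ℝ)]
  rw [alternatingPochhammerConvolution, Nat.sum_antidiagonal_eq_sum_range_succ_mk, mul_sum]
  refine sum_congr rfl fun k hk => ?_
  have hkn : k ≤ n := Nat.lt_succ_iff.mp (mem_range.mp hk)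
  have hk0 : (0 : ℝ) ≤ k := k.cast_nonneg
  have hkn' : (k : ℝ) ≤ n := by exact_mod_cast hkn
  have key := gbinom_self_half_mul_gbinom_self_half_mul_inv
    (x := 2 * (k : ℝ) + v) (y := 2 * (n : ℝ) - 2 * k + v) (by linarith) (by linarith)
  rw [show (2 * (k : ℝ) + v + (2 * n - 2 * k + v)) / 2 = n + v by ring,
    show 2 * (k : ℝ) + v + (2 * n - 2 * k + v) = 2 * n + 2 * v by ring,
    show (2 * (k : ℝ) + v + 1) / 2 = (v + 1) / 2 + k by ring,
    show (2 * (n : ℝ) - 2 * k + v + 1) / 2 = (v + 1) / 2 + (n - k : ℕ) by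
      push_cast [hkn]; ring,
    Gamma_add_nat_eq_ascPochhammer_mul hc, Gamma_add_nat_eq_ascPochhammer_mul hc] at key
  rw [signedPochhammerProd]
  linear_combination ((-1 : ℝ) ^ k * n.choose k) * key

theorem two_rpow_mul_Gamma_sq_div_mul_ascPochhammer (m : ℕ) {v : ℝ} (hv : -1 < v) :
    2 ^ (2 * (2 * (m : ℝ)) + 2 * v) * Gamma ((v + 1) / 2) ^ 2 / (π * Gamma (2 * m + v + 1)) *
        (m.factorial * (ascPochhammer ℝ m).eval ((v + 1) / 2)) =
      2 ^ (2 * m) * gbinom v (v / 2) * (gbinom ((2 * m + v) / 2) (v / 2))⁻¹ := by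
  have hc : ∀ k : ℕ, (v + 1) / 2 ≠ -k := fun k h => by linarith [k.cast_nonneg (α := ℝ)]
  have hdup := Gamma_two_mul_add_one (m + v / 2)
  rw [show 2 * ((m : ℝ) + v / 2) = 2 * m + v by ring,
    show (m : ℝ) + v / 2 + 1 / 2 = (v + 1) / 2 + m by ring,
    Gamma_add_nat_eq_ascPochhammer_mul hc] at hdup
  rw [hdup, gbinom_self_half (by linarith), gbinom, inv_div,
    show (2 * (m : ℝ) + v) / 2 - v / 2 + 1 = m + 1 by ring, Gamma_nat_eq_factorial,
    show (2 * (m : ℝ) + v) / 2 + 1 = m + v / 2 + 1 by ring,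
    show 2 * (2 * (m : ℝ)) + 2 * v = (2 * m + v) + (2 * m + v) by ring, rpow_add two_pos,
    rpow_add two_pos, show (2 : ℝ) ^ (2 * (m : ℝ)) = 2 ^ (2 * m) by norm_cast]
  have h2v : (2 : ℝ) ^ v ≠ 0 := (rpow_pos_of_pos two_pos v).ne'
  have hP : (ascPochhammer ℝ m).eval ((v + 1) / 2) ≠ 0 :=
    (ascPochhammer_pos m _ (by linarith)).ne'
  have hGc : Gamma ((v + 1) / 2) ≠ 0 := (Gamma_pos_of_pos (by linarith)).ne'
  have hGv : Gamma (v / 2 + 1) ≠ 0 := (Gamma_pos_of_pos (by linarith)).ne'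
  have hGm : Gamma (m + v / 2 + 1) ≠ 0 :=
    (Gamma_pos_of_pos (by linarith [m.cast_nonneg (α := ℝ)])).ne'
  have hpi : √π ≠ 0 := (sqrt_pos.mpr pi_pos).ne'
  generalize Gamma (v / 2 + 1) = gv at *
  generalize Gamma (m + v / 2 + 1) = gm at *
  field_simp
  rw [sq_sqrt pi_pos.le]

theorem alternating_convolution_generalization (n : ℕ) (v : ℝ) (hv : v > -1) :
    ∑ k ∈ Finset.range (n + 1),
      (-1 : ℝ) ^ k * (n.choose k : ℝ) * gbinom (2 * (k : ℝ) + v) ((2 * (k : ℝ) + v) / 2) *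
        gbinom (2 * (n : ℝ) - 2 * (k : ℝ) + v) ((2 * (n : ℝ) - 2 * (k : ℝ) + v) / 2) *
        (gbinom ((n : ℝ) + v) ((2 * (k : ℝ) + v) / 2))⁻¹
    = if Even n then
        (2 : ℝ) ^ n * (n.choose (n / 2) : ℝ) * gbinom v (v / 2) *
          (gbinom (((n : ℝ) + v) / 2) (v / 2))⁻¹
      else 0 := by
  rw [sum_gbinom_eq_mul_alternatingPochhammerConvolution n hv]
  rcases Nat.even_or_odd' n with ⟨m, rfl | rfl⟩
  · rw [if_pos (even_two_mul m), alternatingPochhammerConvolution_two_mul,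
      Nat.mul_div_cancel_left m two_pos, ← Nat.centralBinom_eq_two_mul_choose]
    push_cast
    linear_combination (m.centralBinom : ℝ) * two_rpow_mul_Gamma_sq_div_mul_ascPochhammer m hv
  · rw [if_neg (Nat.not_even_two_mul_add_one m), alternatingPochhammerConvolution_two_mul_add_one,
      mul_zero]
end

section
/- Let s, n, m, r be nonnegative integers, let f, g : ℕ → ℝ be sequences, and let p, q : ℕ → ℕ be sequences of nonnegative integers. Suppose that for every real number t, ∑_{k=s}^{n} f(k) · (1+t)^{p(k)} = ∑_{k=m}^{r} g(k) · t^{q(k)}. Then for all real numbers u > −1 and v > −1, ∑_{k=s}^{n} f(k) · B(p(k)+u+v+1, u+1)^{−1} = ((u+1)/(v+1)) · ∑_{k=m}^{r} (−1)^{q(k)} · g(k) · B(q(k)+u+v+1, v+1)^{−1}. -/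
/-! Substitute `t = -x` in the polynomial identity, multiply by the weight `x ^ u * (1 - x) ^ v`
and integrate over `[0, 1]`. Both sides become sums of Beta integrals,
`∫ x ^ a * (1 - x) ^ b = Γ(a + 1) Γ(b + 1) / Γ(a + b + 2)`, and these are exactly the reciprocal
generalized binomial coefficients up to the factors `u + 1` and `v + 1`. -/

open Real

open Finset intervalIntegral

theorem integral_rpow_mul_one_sub_rpow_s14 {α β : ℝ} (hα : -1 < α) (hβ : -1 < β) :
    ∫ x in (0 : ℝ)..1, x ^ α * (1 - x) ^ β
      = Gamma (α + 1) * Gamma (β + 1) / Gamma (α + β + 2) := by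
  have hα' : 0 < ((α + 1 : ℝ) : ℂ).re := by simp; linarith
  have hβ' : 0 < ((β + 1 : ℝ) : ℂ).re := by simp; linarith
  have hB := Complex.Gamma_mul_Gamma_eq_betaIntegral hα' hβ'
  have hΓ : Complex.Gamma ((α + 1 : ℝ) + (β + 1 : ℝ)) ≠ 0 :=
    Complex.Gamma_ne_zero_of_re_pos (by simp at hα' hβ' ⊢; linarith)
  have hcast : ((∫ x in (0 : ℝ)..1, x ^ α * (1 - x) ^ β : ℝ) : ℂ)
      = Complex.betaIntegral (α + 1 : ℝ) (β + 1 : ℝ) := by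
    rw [← integral_ofReal, Complex.betaIntegral]
    refine integral_congr fun x hx => ?_
    rw [Set.uIcc_of_le zero_le_one] at hx
    push_cast
    rw [Complex.ofReal_cpow hx.1, ← Complex.ofReal_one, ← Complex.ofReal_sub,
      Complex.ofReal_cpow (by linarith [hx.2])]
    simp
  have hsum : ((α + 1 : ℝ) : ℂ) + (β + 1 : ℝ) = (α + β + 2 : ℝ) := by push_cast; ring
  rw [hsum] at hB hΓ
  apply Complex.ofReal_injective
  rw [hcast, Complex.ofReal_div, Complex.ofReal_mul, ← Complex.Gamma_ofReal,
    ← Complex.Gamma_ofReal, ← Complex.Gamma_ofReal, hB, mul_div_cancel_left₀ _ hΓ]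

theorem integral_pow_mul_one_sub_pow_mul_rpow (m n : ℕ) {α β : ℝ} (hα : -1 < α) (hβ : -1 < β) :
    ∫ x in (0 : ℝ)..1, x ^ m * (1 - x) ^ n * (x ^ α * (1 - x) ^ β)
      = Gamma (m + α + 1) * Gamma (n + β + 1) / Gamma (m + n + α + β + 2) := by
  have hmα : -1 < m + α := by linarith [m.cast_nonneg (α := ℝ)]
  have hnβ : -1 < n + β := by linarith [n.cast_nonneg (α := ℝ)]
  rw [integral_congr_Ioo_of_le zero_le_one (g := fun x => x ^ (m + α) * (1 - x) ^ (n + β)),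
    integral_rpow_mul_one_sub_rpow_s14 hmα hnβ]
  · ring_nf
  · intro x hx
    simp only [rpow_add hx.1, rpow_add (sub_pos.2 hx.2), rpow_natCast]
    ring

theorem intervalIntegrable_rpow_mul_one_sub_rpow {α β : ℝ} (hα : -1 < α) (hβ : -1 < β) :
    IntervalIntegrable (fun x : ℝ => x ^ α * (1 - x) ^ β) MeasureTheory.volume 0 1 := by
  refine intervalIntegrable_of_integral_ne_zero ?_
  rw [integral_rpow_mul_one_sub_rpow_s14 hα hβ]
  exact (div_pos (mul_pos (Gamma_pos_of_pos (by linarith)) (Gamma_pos_of_pos (by linarith)))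
    (Gamma_pos_of_pos (by linarith))).ne'

theorem inv_gbinom_eq (a : ℝ) {b : ℝ} (hb : b ≠ 0) :
    (gbinom a b)⁻¹ = b * (Gamma b * Gamma (a - b + 1) / Gamma (a + 1)) := by
  rw [gbinom, Gamma_add_one hb, inv_div]
  ring

theorem inv_gbinom_eq_integral_one_sub_pow (n : ℕ) {u v : ℝ} (hu : -1 < u) (hv : -1 < v) :
    (gbinom (n + u + v + 1) (u + 1))⁻¹
      = (u + 1) * ∫ x in (0 : ℝ)..1, (1 - x) ^ n * (x ^ u * (1 - x) ^ v) := by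
  have h := integral_pow_mul_one_sub_pow_mul_rpow 0 n hu hv
  simp only [pow_zero, one_mul, Nat.cast_zero, zero_add] at h
  rw [h, inv_gbinom_eq _ (by linarith)]
  ring_nf

theorem inv_gbinom_eq_integral_pow (n : ℕ) {u v : ℝ} (hu : -1 < u) (hv : -1 < v) :
    (gbinom (n + u + v + 1) (v + 1))⁻¹
      = (v + 1) * ∫ x in (0 : ℝ)..1, x ^ n * (x ^ u * (1 - x) ^ v) := by
  have h := integral_pow_mul_one_sub_pow_mul_rpow n 0 hu hv
  simp only [pow_zero, mul_one, Nat.cast_zero, add_zero, zero_add] at h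
  rw [h, inv_gbinom_eq _ (by linarith)]
  ring_nf

theorem combinatorial_from_polynomial (s n m r : ℕ) (f g : ℕ → ℝ) (p q : ℕ → ℕ)
    (hP : ∀ t : ℝ,
      ∑ k ∈ Finset.Icc s n, f k * (1 + t) ^ (p k) = ∑ k ∈ Finset.Icc m r, g k * t ^ (q k))
    (u v : ℝ) (hu : u > -1) (hv : v > -1) :
    ∑ k ∈ Finset.Icc s n, f k * (gbinom ((p k : ℝ) + u + v + 1) (u + 1))⁻¹
    = (u + 1) / (v + 1) *
        ∑ k ∈ Finset.Icc m r,
          (-1 : ℝ) ^ (q k) * g k * (gbinom ((q k : ℝ) + u + v + 1) (v + 1))⁻¹ := by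
  have hweighted : ∀ x : ℝ,
      ∑ k ∈ Icc s n, f k * ((1 - x) ^ p k * (x ^ u * (1 - x) ^ v))
        = ∑ k ∈ Icc m r, (-1) ^ q k * g k * (x ^ q k * (x ^ u * (1 - x) ^ v)) := by
    intro x
    have h := congrArg (· * (x ^ u * (1 - x) ^ v)) (hP (-x))
    simp only [sum_mul, ← sub_eq_add_neg] at h
    convert h using 2 with k _ k _
    · ring
    · rw [neg_pow]; ring
  have hweight := intervalIntegrable_rpow_mul_one_sub_rpow hu hv
  calc _ = (u + 1) * ∫ x in (0 : ℝ)..1,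
          ∑ k ∈ Icc s n, f k * ((1 - x) ^ p k * (x ^ u * (1 - x) ^ v)) := by
        rw [integral_finsetSum fun k _ => (hweight.continuousOn_mul (by fun_prop)).const_mul _,
          mul_sum]
        refine sum_congr rfl fun k _ => ?_
        rw [integral_const_mul, inv_gbinom_eq_integral_one_sub_pow _ hu hv]
        ring
    _ = (u + 1) * ∫ x in (0 : ℝ)..1,
          ∑ k ∈ Icc m r, (-1) ^ q k * g k * (x ^ q k * (x ^ u * (1 - x) ^ v)) := by
        simp_rw [hweighted]
    _ = _ := by
        rw [integral_finsetSum fun k _ => (hweight.continuousOn_mul (by fun_prop)).const_mul _,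
          mul_sum, mul_sum]
        refine sum_congr rfl fun k _ => ?_
        rw [integral_const_mul, inv_gbinom_eq_integral_pow _ hu hv]
        field_simp [show v + 1 ≠ 0 by linarith]
end

section
/- Let n be a nonnegative integer, let v > −1 be a real number, and let x be a real number. Then ∑_{k=0}^{n} (−1)^{n−k} · C(n,k) · 2^{−k} · B(2k+v, (2k+v)/2) · B(k+v, v/2)^{−1} · (1−x)^{n−k} = ∑_{k=0}^{⌊n/2⌋} C(n, 2k) · 2^{−2k} · C(2k, k) · B((2k+v)/2, k)^{−1} · x^{n−2k}. -/
open Real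

open Finset fwdDiff
open scoped Nat

/-! By Legendre's duplication formula the `k`-th coefficient on the left is `K · F_α(k)`, where
`F_α(k) = 2^k Γ(k+α) / Γ(k+2α)`, `α = (v+1)/2` and `K = 2^v Γ(v/2+1) / √π`. Re-expanding
`∑ C(n,k) a_k (x-1)^(n-k)` in powers of `x` replaces the `a_k` by their iterated forward
differences `Δ^m a (0)`. Since `Δ F_α(k) = 2k F_{α+1}(k-1)`, one gets `Δ F_α(0) = 0` and
`Δ^(m+2) F_α(0) = 2(m+1) Δ^m F_{α+1}(0)`: the odd differences vanish and the even ones are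
`(2j)!/j! · Γ(j+α) / Γ(2j+2α)`, which is `1/K` times the coefficient on the right. -/

theorem sum_choose_mul_pow_eq_sum_fwdDiff_iter {R : Type*} [CommRing R] (a : ℕ → R) (y : R)
    (n : ℕ) :
    ∑ k ∈ range (n + 1), (n.choose k : R) * (a k * y ^ (n - k)) =
      ∑ m ∈ range (n + 1), (n.choose m : R) * (Δ_[1] ^[m] a 0 * (y + 1) ^ (n - m)) := by
  have sum_pow_succ_sub (b : ℕ → R) (z : R) (n : ℕ) :
      ∑ i ∈ range (n + 1), (n.choose i : R) * (b i * z ^ (n + 1 - i)) =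
        z * ∑ i ∈ range (n + 1), (n.choose i : R) * (b i * z ^ (n - i)) := by
    rw [mul_sum]
    refine sum_congr rfl fun i hi => ?_
    rw [Nat.sub_add_comm (Nat.lt_succ_iff.mp (mem_range.mp hi)), pow_succ]
    ring
  induction n generalizing a with
  | zero => simp
  | succ n ih =>
    rw [sum_choose_succ_mul (fun i j => a i * y ^ j),
      sum_choose_succ_mul (fun i j => Δ_[1] ^[i] a 0 * (y + 1) ^ j)]
    have shift : ∀ i, a (i + 1) = a i + Δ_[1] a i := fun i => by simp [fwdDiff]
    simp only [shift, add_mul, mul_add, sum_add_distrib, sum_pow_succ_sub,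
      Function.iterate_succ_apply]
    rw [ih, ih]
    ring

theorem sum_range_succ_eq_sum_even_of_odd_eq_zero {M : Type*} [AddCommMonoid M] {g : ℕ → M}
    (h_odd : ∀ j, g (2 * j + 1) = 0) (n : ℕ) :
    ∑ m ∈ range (n + 1), g m = ∑ j ∈ range (n / 2 + 1), g (2 * j) := by
  symm
  rw [← sum_image (f := g) (g := (2 * ·)) (fun a _ b _ hab => by beta_reduce at hab; omega)]
  refine sum_subset (fun m hm => ?_) fun m hm hm' => ?_
  · simp only [mem_image, mem_range] at hm ⊢
    omega
  · obtain ⟨j, rfl | rfl⟩ := Nat.even_or_odd' m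
    · simp only [mem_image, mem_range, not_exists, not_and] at hm hm'
      exact absurd rfl (hm' j (by omega))
    · exact h_odd j

theorem fwdDiff_iter_succ_zero_of_eq_mul {R : Type*} [CommRing R] {f g : ℕ → R} (h₀ : f 0 = 0)
    (h_succ : ∀ k, f (k + 1) = (k + 1) * g k) (m : ℕ) :
    Δ_[1] ^[m + 1] f 0 = (m + 1) * Δ_[1] ^[m] g 0 := by
  rw [fwdDiff_iter_eq_sum_shift, fwdDiff_iter_eq_sum_shift, sum_range_succ', mul_sum]
  simp only [zero_add, nsmul_eq_mul, mul_one, Nat.cast_add, Nat.cast_one, h_succ, Nat.cast_zero,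
    h₀, smul_zero, add_zero, Nat.add_sub_add_right, zsmul_eq_mul]
  refine sum_congr rfl fun k _ => ?_
  have h := congrArg (Nat.cast (R := R)) (Nat.add_one_mul_choose_eq m k)
  push_cast at h ⊢
  linear_combination (-1 : R) ^ (m - k) * g k * h.symm

noncomputable def gammaQuotient (α : ℝ) (k : ℕ) : ℝ :=
  2 ^ k * Gamma (k + α) / Gamma (k + 2 * α)

section gammaQuotient

variable {α : ℝ}

theorem fwdDiff_gammaQuotient (hα : 0 < α) (k : ℕ) :
    Δ_[1] (gammaQuotient α) k = k * (2 ^ k * Gamma (k + α) / Gamma (k + 2 * α + 1)) := by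
  have hkα : (k : ℝ) + α ≠ 0 := by positivity
  have hk2α : (k : ℝ) + 2 * α ≠ 0 := by positivity
  have : Gamma (k + 2 * α) ≠ 0 := (Gamma_pos_of_pos (by positivity)).ne'
  simp only [fwdDiff, gammaQuotient, Nat.cast_add, Nat.cast_one]
  rw [add_right_comm, Gamma_add_one hkα, add_right_comm, Gamma_add_one hk2α, pow_succ]
  field_simp
  ring

theorem fwdDiff_iter_gammaQuotient_add_two (hα : 0 < α) (m : ℕ) :
    Δ_[1] ^[m + 2] (gammaQuotient α) 0 =
      2 * (m + 1) * Δ_[1] ^[m] (gammaQuotient (α + 1)) 0 := by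
  rw [Function.iterate_succ_apply,
    fwdDiff_iter_succ_zero_of_eq_mul (g := (2 : ℝ) • gammaQuotient (α + 1)),
    fwdDiff_iter_const_smul, Pi.smul_apply, smul_eq_mul]
  · ring
  · simp [fwdDiff_gammaQuotient hα]
  · intro k
    rw [fwdDiff_gammaQuotient hα, Pi.smul_apply, smul_eq_mul, gammaQuotient]
    push_cast
    ring_nf

theorem fwdDiff_iter_gammaQuotient_odd (hα : 0 < α) (j : ℕ) :
    Δ_[1] ^[2 * j + 1] (gammaQuotient α) 0 = 0 := by
  induction j generalizing α with
  | zero => simp [fwdDiff_gammaQuotient hα]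
  | succ j ih =>
    rw [show 2 * (j + 1) + 1 = 2 * j + 1 + 2 by ring, fwdDiff_iter_gammaQuotient_add_two hα,
      ih (by positivity), mul_zero]

theorem fwdDiff_iter_gammaQuotient_even (hα : 0 < α) (j : ℕ) :
    Δ_[1] ^[2 * j] (gammaQuotient α) 0 =
      (2 * j)! / j ! * Gamma (j + α) / Gamma (2 * j + 2 * α) := by
  induction j generalizing α with
  | zero => simp [gammaQuotient]
  | succ j ih =>
    rw [show 2 * (j + 1) = 2 * j + 2 by ring, fwdDiff_iter_gammaQuotient_add_two hα,
      ih (by positivity), Nat.factorial_succ, Nat.factorial_succ, Nat.factorial_succ]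
    push_cast
    ring_nf
    field_simp
    ring

end gammaQuotient

theorem Gamma_two_mul_nat_add_one (v : ℝ) (k : ℕ) :
    Gamma (2 * k + v + 1) =
      2 ^ (2 * k) * 2 ^ v / √π * Gamma (k + (v + 1) / 2) * Gamma (k + v / 2 + 1) := by
  have hdup := Gamma_mul_Gamma_add_half (k + (v + 1) / 2)
  have hpow : (2 : ℝ) ^ (1 - 2 * (k + (v + 1) / 2)) = (2 ^ (2 * k) * 2 ^ v)⁻¹ := by
    rw [show 1 - 2 * (k + (v + 1) / 2) = -(((2 * k : ℕ) : ℝ) + v) by push_cast; ring,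
      rpow_neg zero_le_two, rpow_add two_pos, rpow_natCast]
  rw [hpow, show k + (v + 1) / 2 + 1 / 2 = k + v / 2 + 1 by ring,
    show 2 * (k + (v + 1) / 2) = 2 * k + v + 1 by ring] at hdup
  have : √π ≠ 0 := (sqrt_pos.mpr pi_pos).ne'
  have : (2 : ℝ) ^ v ≠ 0 := (rpow_pos_of_pos two_pos v).ne'
  rw [mul_assoc, hdup]
  field_simp

section coefficients

variable {v : ℝ}

theorem gbinom_ratio_eq_gammaQuotient (hv : -1 < v) (k : ℕ) :
    (2 : ℝ) ^ (-(k : ℝ)) * gbinom (2 * k + v) ((2 * k + v) / 2) *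
        (gbinom (k + v) (v / 2))⁻¹ =
      2 ^ v * Gamma (v / 2 + 1) / √π * gammaQuotient ((v + 1) / 2) k := by
  have hk : (0 : ℝ) ≤ k := Nat.cast_nonneg k
  simp only [gbinom, gammaQuotient]
  rw [rpow_neg zero_le_two, rpow_natCast, Gamma_two_mul_nat_add_one,
    show (2 * k + v) / 2 + 1 = k + v / 2 + 1 by ring,
    show 2 * k + v - (2 * k + v) / 2 + 1 = k + v / 2 + 1 by ring,
    show k + v - v / 2 + 1 = k + v / 2 + 1 by ring, show k + 2 * ((v + 1) / 2) = k + v + 1 by ring]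
  have : Gamma (k + v / 2 + 1) ≠ 0 := (Gamma_pos_of_pos (by linarith)).ne'
  have : Gamma (v / 2 + 1) ≠ 0 := (Gamma_pos_of_pos (by linarith)).ne'
  have : Gamma (k + v + 1) ≠ 0 := (Gamma_pos_of_pos (by linarith)).ne'
  have : (2 : ℝ) ^ v ≠ 0 := (rpow_pos_of_pos two_pos v).ne'
  have : √π ≠ 0 := (sqrt_pos.mpr pi_pos).ne'
  generalize Gamma (k + v / 2 + 1) = A at *
  generalize Gamma (v / 2 + 1) = B at *
  generalize Gamma (k + v + 1) = C at *
  field_simp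
  ring

theorem choose_mul_inv_gbinom_eq (hv : -1 < v) (j : ℕ) :
    (2 : ℝ) ^ (-2 * (j : ℝ)) * ((2 * j).choose j : ℝ) * (gbinom ((2 * j + v) / 2) j)⁻¹ =
      2 ^ v * Gamma (v / 2 + 1) / √π *
        ((2 * j)! / j ! * Gamma (j + (v + 1) / 2) / Gamma (2 * j + 2 * ((v + 1) / 2))) := by
  have hj : (0 : ℝ) ≤ j := Nat.cast_nonneg j
  have hchoose : ((2 * j).choose j : ℝ) = (2 * j)! / (j ! * j !) := by
    rw [Nat.cast_choose ℝ (by omega : j ≤ 2 * j), show 2 * j - j = j by omega]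
  simp only [gbinom]
  rw [show -2 * (j : ℝ) = -((2 * j : ℕ) : ℝ) by push_cast; ring, rpow_neg zero_le_two,
    rpow_natCast, hchoose, show 2 * j + 2 * ((v + 1) / 2) = 2 * j + v + 1 by ring,
    Gamma_two_mul_nat_add_one, show (2 * j + v) / 2 + 1 = j + v / 2 + 1 by ring,
    show (2 * j + v) / 2 - j + 1 = v / 2 + 1 by ring, Gamma_nat_eq_factorial]
  have : Gamma (j + (v + 1) / 2) ≠ 0 := (Gamma_pos_of_pos (by linarith)).ne'
  have : Gamma (j + v / 2 + 1) ≠ 0 := (Gamma_pos_of_pos (by linarith)).ne'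
  have : Gamma (v / 2 + 1) ≠ 0 := (Gamma_pos_of_pos (by linarith)).ne'
  have : (2 : ℝ) ^ v ≠ 0 := (rpow_pos_of_pos two_pos v).ne'
  have : √π ≠ 0 := (sqrt_pos.mpr pi_pos).ne'
  generalize Gamma (j + (v + 1) / 2) = A at *
  generalize Gamma (j + v / 2 + 1) = B at *
  generalize Gamma (v / 2 + 1) = C at *
  field_simp

end coefficients

theorem polynomial_identity_central_binom (n : ℕ) (v : ℝ) (hv : v > -1) (x : ℝ) :
    ∑ k ∈ Finset.range (n + 1),
      (-1 : ℝ) ^ (n - k) * (n.choose k : ℝ) * (2 : ℝ) ^ (-(k : ℝ)) *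
        gbinom (2 * (k : ℝ) + v) ((2 * (k : ℝ) + v) / 2) *
        (gbinom ((k : ℝ) + v) (v / 2))⁻¹ * (1 - x) ^ (n - k)
    = ∑ k ∈ Finset.range (n / 2 + 1),
        (n.choose (2 * k) : ℝ) * (2 : ℝ) ^ (-2 * (k : ℝ)) * ((2 * k).choose k : ℝ) *
          (gbinom ((2 * (k : ℝ) + v) / 2) (k : ℝ))⁻¹ * x ^ (n - 2 * k) := by
  set α := (v + 1) / 2
  set K := 2 ^ v * Gamma (v / 2 + 1) / √π
  have hα : 0 < α := by simp only [α]; linarith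
  have h_lhs : ∀ k ∈ range (n + 1),
      (-1 : ℝ) ^ (n - k) * (n.choose k : ℝ) * (2 : ℝ) ^ (-(k : ℝ)) *
        gbinom (2 * (k : ℝ) + v) ((2 * (k : ℝ) + v) / 2) *
        (gbinom ((k : ℝ) + v) (v / 2))⁻¹ * (1 - x) ^ (n - k) =
      n.choose k * ((K • gammaQuotient α) k * (x - 1) ^ (n - k)) := fun k _ => by
    have h_sign : (-1 : ℝ) ^ (n - k) * (1 - x) ^ (n - k) = (x - 1) ^ (n - k) := by
      rw [← mul_pow, neg_one_mul, neg_sub]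
    rw [Pi.smul_apply, smul_eq_mul]
    linear_combination (n.choose k * (-1 : ℝ) ^ (n - k) * (1 - x) ^ (n - k)) *
      gbinom_ratio_eq_gammaQuotient hv k + (n.choose k * K * gammaQuotient α k) * h_sign
  rw [sum_congr rfl h_lhs, sum_choose_mul_pow_eq_sum_fwdDiff_iter, sub_add_cancel,
    sum_range_succ_eq_sum_even_of_odd_eq_zero]
  · refine sum_congr rfl fun j _ => ?_
    rw [fwdDiff_iter_const_smul, Pi.smul_apply, smul_eq_mul, fwdDiff_iter_gammaQuotient_even hα,
      ← choose_mul_inv_gbinom_eq hv]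
    ring
  · intro j
    rw [fwdDiff_iter_const_smul, Pi.smul_apply, fwdDiff_iter_gammaQuotient_odd hα]
    simp
end
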